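/- arXiv:1705.01301 — 9 statements merged into one kernel-verified Lean document; each statement's English description precedes it below -/
import Mathlib

section
/- Let D be an integral domain, M a prime ideal of D, and V a valuation overring of D that is the integral closure of the localization D_M in the fraction field of D. Then the set of prime ideals of D contained in M is linearly ordered by inclusion. -/
/-!
The integral closure `B` of `D_M` equals `V`, so it is a valuation ring and its ideals are totally
ordered. Since `D_M → B` is an injective integral extension, lying over makes every prime of `D_M`
a contraction of an ideal of `B`, so the primes of `D_M` form a chain; these correspond
order-isomorphically to the primes of `D` contained in `M`.
-/

theorem Ideal.isChain_isPrime_of_isIntegral {A B : Type*} [CommRing A] [CommRing B]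
    [Algebra A B] [Algebra.IsIntegral A B] [PreValuationRing B]
    (hinj : Function.Injective (algebraMap A B)) :
    IsChain (· ≤ ·) {P : Ideal A | P.IsPrime} := by
  have hlies : {P : Ideal A | P.IsPrime} ⊆ Ideal.comap (algebraMap A B) '' Set.univ := by
    intro P (hP : P.IsPrime)
    obtain ⟨Q, -, -, hQP⟩ := Ideal.exists_ideal_over_prime_of_isIntegral P ⊥
      (Ideal.comap_bot_le_of_injective _ hinj)
    exact ⟨Q, trivial, hQP⟩
  refine (Monotone.isChain_image (fun _ _ ↦ Ideal.comap_mono) ?_).mono hlies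
  exact fun I _ J _ _ ↦ Std.Total.total I J

theorem IsLocalization.AtPrime.isChain_isPrime_le {R S : Type*} [CommRing R] [CommRing S]
    [Algebra R S] (M : Ideal R) [M.IsPrime] [IsLocalization.AtPrime S M]
    (h : IsChain (· ≤ ·) {P : Ideal S | P.IsPrime}) :
    IsChain (· ≤ ·) {P : Ideal R | P.IsPrime ∧ P ≤ M} := by
  have hunder :
      {P : Ideal R | P.IsPrime ∧ P ≤ M} ⊆ Ideal.comap (algebraMap R S) '' {P | P.IsPrime} :=
    fun P hP ↦ ⟨_, (orderIsoOfPrime S M |>.symm ⟨P, hP⟩).2,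
      congrArg Subtype.val ((orderIsoOfPrime S M).apply_symm_apply ⟨P, hP⟩)⟩
  exact (Monotone.isChain_image (fun _ _ ↦ Ideal.comap_mono) h).mono hunder

theorem stmt1_general (D K : Type*) [CommRing D] [IsDomain D] [Field K] [Algebra D K]
    [IsFractionRing D K] (M : Ideal D) [M.IsPrime] (V : ValuationSubring K)
    (hV : V.toSubring =
      (integralClosure
        (Localization.subalgebra K M.primeCompl M.primeCompl_le_nonZeroDivisors) K).toSubring) :
    IsChain (· ≤ ·) {P : Ideal D | P.IsPrime ∧ P ≤ M} := by
  set A := Localization.subalgebra K M.primeCompl M.primeCompl_le_nonZeroDivisors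
  have hB : PreValuationRing V.toSubring := inferInstanceAs (PreValuationRing V)
  rw [hV] at hB
  exact IsLocalization.AtPrime.isChain_isPrime_le (S := A) M
    (Ideal.isChain_isPrime_of_isIntegral (B := integralClosure A K)
      fun _ _ h ↦ Subtype.ext (congrArg Subtype.val h :))

theorem stmt1 (D K : Type*) [CommRing D] [IsDomain D] [Field K] [Algebra D K]
    [IsFractionRing D K] (M : Ideal D) [M.IsPrime] (V : ValuationSubring K)
    (hDV : ∀ d : D, algebraMap D K d ∈ V)
    (hV : V.toSubring =
      (integralClosure
        (Localization.subalgebra K M.primeCompl M.primeCompl_le_nonZeroDivisors) K).toSubring) :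
    IsChain (· ≤ ·) {P : Ideal D | P.IsPrime ∧ P ≤ M} :=
  stmt1_general D K M V hV
end

section
/- Let D be an integral domain with fraction field K, let I be a finitely generated ideal of D, and let x be a nonzero element of K such that x lies in IV for every valuation subring V of K containing D. Then x satisfies an equation x^n + a_1 x^{n-1} + ... + a_n = 0 with a_i in I^i for each i. -/
/-!
Put `y = x⁻¹` and let `A ⊆ K` be the image of the Rees algebra `D[It]` under `t ↦ y`, i.e. the
ring `D[yI]`. If the ideal `yI·A` is proper, some valuation ring `V ⊇ A` has `yI` inside its
maximal ideal, and then `x ∈ IV` would put `1 = yx` there too. So `1 ∈ yI·A`, i.e. `1 = g(y)` for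
a polynomial `g = ∑ gᵢ tⁱ` with `g₀ = 0` and `gᵢ ∈ Iⁱ`; multiplying by `x ^ deg g` gives the
equation of integral dependence.
-/

open Polynomial

section

variable {R K : Type*} [CommRing R] [Field K]

lemma ValuationSubring.valuation_mul_lt_one_of_mem_span {V : ValuationSubring K} {s : Set K}
    {c z : K} (hs : ∀ t ∈ s, V.valuation (c * t) < 1) (hz : z ∈ Submodule.span V s) :
    V.valuation (c * z) < 1 := by
  induction hz using Submodule.span_induction with
  | mem t ht => exact hs t ht
  | zero => simp
  | add z w _ _ hz hw => exact mul_add c z w ▸ V.valuation.map_add_lt hz hw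
  | smul v z _ hz =>
    rw [show c * v • z = v * (c * z) from mul_left_comm .., map_mul]
    exact lt_of_le_of_lt (mul_le_of_le_one_left' (V.valuation_le_one v)) hz

variable [Algebra R K]

lemma exists_mem_reesAlgebra_aeval_eq_one (I : Ideal R) (y : K)
    (h : ∀ V : ValuationSubring K, (∀ r : R, algebraMap R K r ∈ V) →
      ∃ a ∈ I, 1 ≤ V.valuation (y * algebraMap R K a)) :
    ∃ g ∈ reesAlgebra I, g.coeff 0 = 0 ∧ aeval y g = 1 := by
  let ψ : reesAlgebra I →+* K := ((aeval y).comp (reesAlgebra I).val).toRingHom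
  -- `𝔞 = t·R[It]`, whose image in `ψ.range = R[yI]` is the ideal `yI·R[yI]`
  let 𝔞 : Ideal (reesAlgebra I) :=
    RingHom.ker (constantCoeff.comp (reesAlgebra I).val.toRingHom)
  by_cases h𝔞 : 𝔞.map ψ.rangeRestrict = ⊤
  · obtain ⟨g, hg𝔞, hg⟩ := (Ideal.mem_map_iff_of_surjective _ ψ.rangeRestrict_surjective).1
      (h𝔞 ▸ Submodule.mem_top : (1 : ψ.range) ∈ 𝔞.map ψ.rangeRestrict)
    exact ⟨g, g.2, hg𝔞, congrArg Subtype.val hg⟩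
  · obtain ⟨V, hAV, hV⟩ := Ideal.image_subset_nonunits_valuationSubring _ h𝔞
    obtain ⟨a, ha, hva⟩ := h V fun r ↦ hAV ⟨algebraMap R (reesAlgebra I) r, by simp [ψ]⟩
    let ga : reesAlgebra I := ⟨monomial 1 a, reesAlgebra.monomial_mem.2 (by rwa [pow_one])⟩
    have hga : ψ.rangeRestrict ga ∈ 𝔞.map ψ.rangeRestrict :=
      Ideal.mem_map_of_mem _ (by simp [𝔞, ga])
    have hψga : ψ ga = y * algebraMap R K a := by simp [ψ, ga, mul_comm]
    exact absurd (hψga ▸ V.mem_nonunits_iff.1 (hV ⟨_, hga, rfl⟩)) (not_lt.2 hva)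

lemma pow_natDegree_eq_sum_of_aeval_inv_eq_one {g : R[X]} {x : K} (hx : x ≠ 0)
    (hg0 : g.coeff 0 = 0) (hg : aeval x⁻¹ g = 1) :
    x ^ g.natDegree =
      ∑ i ∈ Finset.Icc 1 g.natDegree, algebraMap R K (g.coeff i) * x ^ (g.natDegree - i) := by
  set N := g.natDegree
  calc x ^ N = x ^ N * aeval x⁻¹ g := by rw [hg, mul_one]
    _ = ∑ i ∈ Finset.range (N + 1), algebraMap R K (g.coeff i) * x ^ (N - i) := by
      rw [aeval_eq_sum_range, Finset.mul_sum]
      refine Finset.sum_congr rfl fun i hi ↦ ?_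
      rw [Algebra.smul_def, inv_pow, pow_sub₀ x hx (Finset.mem_range_succ_iff.1 hi)]
      ring
    _ = _ := by
      rw [Finset.range_eq_Ico, Finset.sum_eq_sum_Ico_succ_bot N.add_one_pos, hg0, map_zero,
        zero_mul, zero_add, zero_add, Finset.Ico_add_one_right_eq_Icc]

end

theorem stmt4_general (D K : Type*) [CommRing D] [Field K] [Algebra D K]
    (I : Ideal D) (x : K) (hx : x ≠ 0)
    (h : ∀ V : ValuationSubring K, (∀ d : D, algebraMap D K d ∈ V) →
      x ∈ Submodule.span V (algebraMap D K '' (I : Set D))) :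
    ∃ n : ℕ, 0 < n ∧ ∃ a : ℕ → D, (∀ i ∈ Finset.Icc 1 n, a i ∈ I ^ i) ∧
      x ^ n + ∑ i ∈ Finset.Icc 1 n, algebraMap D K (a i) * x ^ (n - i) = 0 := by
  obtain ⟨g, hg, hg0, hgx⟩ := exists_mem_reesAlgebra_aeval_eq_one I x⁻¹ fun V hDV ↦ by
    by_contra! hI
    have := V.valuation_mul_lt_one_of_mem_span (c := x⁻¹) (Set.forall_mem_image.2 hI) (h V hDV)
    simp [inv_mul_cancel₀ hx] at this
  have hdeg : 0 < g.natDegree := by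
    by_contra! h0
    rw [eq_C_of_natDegree_eq_zero (Nat.le_zero.1 h0), hg0, map_zero, map_zero] at hgx
    exact zero_ne_one hgx
  refine ⟨g.natDegree, hdeg, fun i ↦ -g.coeff i, fun i _ ↦ neg_mem (hg i), ?_⟩
  simp only [map_neg, neg_mul, Finset.sum_neg_distrib, ← sub_eq_add_neg, sub_eq_zero]
  exact pow_natDegree_eq_sum_of_aeval_inv_eq_one hx hg0 hgx

theorem stmt4 (D K : Type*) [CommRing D] [IsDomain D] [Field K] [Algebra D K]
    [IsFractionRing D K] (I : Ideal D) (hI : I.FG) (x : K) (hx : x ≠ 0)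
    (h : ∀ V : ValuationSubring K, (∀ d : D, algebraMap D K d ∈ V) →
      x ∈ Submodule.span V (algebraMap D K '' (I : Set D))) :
    ∃ n : ℕ, 0 < n ∧ ∃ a : ℕ → D, (∀ i ∈ Finset.Icc 1 n, a i ∈ I ^ i) ∧
      x ^ n + ∑ i ∈ Finset.Icc 1 n, algebraMap D K (a i) * x ^ (n - i) = 0 :=
  stmt4_general D K I x hx h
end

section
/- Let D be an integral domain with fraction field K, I a finitely generated ideal of D, and x in K satisfying an equation of integral dependence x^n + a_1 x^{n-1} + ... + a_n = 0 with a_i in I^i. Then x lies in IV for every valuation subring V of K containing D. -/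
theorem stmt5 (D K : Type*) [CommRing D] [IsDomain D] [Field K] [Algebra D K]
    [IsFractionRing D K] (I : Ideal D) (hI : I.FG) (x : K)
    (n : ℕ) (hn : 0 < n) (a : ℕ → D) (ha : ∀ i ∈ Finset.Icc 1 n, a i ∈ I ^ i)
    (heq : x ^ n + ∑ i ∈ Finset.Icc 1 n, algebraMap D K (a i) * x ^ (n - i) = 0) :
    ∀ V : ValuationSubring K, (∀ d : D, algebraMap D K d ∈ V) →
      x ∈ Submodule.span V (algebraMap D K '' (I : Set D)) := by
  intro V hV
  classical
  by_cases hx : x = 0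
  · simp [hx]
  set v := V.valuation with hv
  obtain ⟨s, hs⟩ := hI
  have hsne : (insert (0 : D) s).Nonempty := ⟨0, Finset.mem_insert_self _ _⟩
  obtain ⟨g, hgs, hgmax⟩ := (insert (0 : D) s).exists_max_image
    (fun b => v (algebraMap D K b)) hsne
  have hgI : g ∈ I := by
    rcases Finset.mem_insert.mp hgs with h | h
    · simp [h]
    · rw [← hs]; exact Ideal.subset_span h
  -- Lemma A
  have hA : ∀ b ∈ I, v (algebraMap D K b) ≤ v (algebraMap D K g) := by
    intro b hb
    rw [← hs] at hb
    induction hb using Submodule.span_induction with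
    | mem y hy => exact hgmax y (Finset.mem_insert_of_mem hy)
    | zero => simp
    | add y z _ _ hy hz =>
      rw [map_add]
      exact le_trans (v.map_add _ _) (max_le hy hz)
    | smul d y _ hy =>
      rw [smul_eq_mul, map_mul, v.map_mul]
      calc v (algebraMap D K d) * v (algebraMap D K y)
          ≤ 1 * v (algebraMap D K g) :=
            mul_le_mul' ((V.valuation_le_one_iff _).mpr (hV d)) hy
        _ = _ := one_mul _
  -- Lemma B
  have hB : ∀ i : ℕ, 1 ≤ i → ∀ b ∈ I ^ i,
      v (algebraMap D K b) ≤ v (algebraMap D K g) ^ i := by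
    intro i hi
    induction i with
    | zero => omega
    | succ i ih =>
      rcases Nat.eq_or_lt_of_le hi with h1 | h1
      · intro b hb
        rw [← h1] at hb ⊢
        simpa using hA b (by simpa using hb)
      · intro b hb
        rw [pow_succ] at hb
        refine Submodule.mul_induction_on hb (fun p hp q hq => ?_) (fun y z hy hz => ?_)
        · rw [map_mul, v.map_mul, pow_succ]
          exact mul_le_mul' (ih (by omega) p hp) (hA q hq)
        · rw [map_add]
          exact le_trans (v.map_add _ _) (max_le hy hz)
  have hvx0 : v x ≠ 0 := v.ne_zero_iff.mpr hx
  have hvx : v x ≤ v (algebraMap D K g) := by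
    by_contra h
    push_neg at h
    have hterm : ∀ i ∈ Finset.Icc 1 n,
        v (algebraMap D K (a i) * x ^ (n - i)) < v x ^ n := by
      intro i hi
      obtain ⟨hi1, hin⟩ := Finset.mem_Icc.mp hi
      have h1 : v (algebraMap D K (a i)) ≤ v (algebraMap D K g) ^ i :=
        hB i hi1 _ (ha i hi)
      have h2 : v (algebraMap D K g) ^ i < v x ^ i :=
        pow_lt_pow_left₀ h zero_le' (by omega)
      calc v (algebraMap D K (a i) * x ^ (n - i))
          = v (algebraMap D K (a i)) * v x ^ (n - i) := by
            rw [v.map_mul, v.map_pow]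
        _ ≤ v (algebraMap D K g) ^ i * v x ^ (n - i) :=
            mul_le_mul_left h1 _
        _ < v x ^ i * v x ^ (n - i) := by
            exact mul_lt_mul_of_pos_right h2 (pow_pos (lt_of_le_of_ne zero_le' (Ne.symm hvx0)) _)
        _ = v x ^ n := by rw [← pow_add]; congr 1; omega
    have hxn : x ^ n = - ∑ i ∈ Finset.Icc 1 n, algebraMap D K (a i) * x ^ (n - i) := by
      linear_combination heq
    have : v (x ^ n) < v x ^ n := by
      rw [hxn, v.map_neg]
      exact v.map_sum_lt (pow_ne_zero n hvx0) hterm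
    rw [v.map_pow] at this
    exact lt_irrefl _ this
  have hg0 : algebraMap D K g ≠ 0 := by
    intro h
    rw [h, map_zero] at hvx
    exact hvx0 (le_antisymm hvx zero_le')
  have hvg0 : (0 : _) < v (algebraMap D K g) := by
    exact lt_of_le_of_ne zero_le' (Ne.symm (v.ne_zero_iff.mpr hg0))
  have hc : x / algebraMap D K g ∈ V := by
    apply V.mem_of_valuation_le_one
    rw [map_div₀]
    exact (div_le_one₀ hvg0).mpr hvx
  have : x = (⟨_, hc⟩ : V) • algebraMap D K g := by
    show x = (x / algebraMap D K g) * algebraMap D K g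
    field_simp
  rw [this]
  exact Submodule.smul_mem _ _ (Submodule.subset_span ⟨g, hgI, rfl⟩)
end

section
/- Let D be an integral domain whose Zariski space Zar(D) is a Noetherian topological space. Then the valuative dimension of D is at most twice the Krull dimension of D; that is, every valuation overring of D has Krull dimension at most 2·dim(D). -/
/-- The Zariski topology on the set of valuation subrings of a field `K`. -/
instance zariskiTopology (K : Type*) [Field K] : TopologicalSpace (ValuationSubring K) :=
  TopologicalSpace.generateFrom {U | ∃ x : K, U = {V : ValuationSubring K | x ∈ V}}

/-- The Zariski space `Zar(D)`: valuation subrings of `K` containing the image of `D`. -/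
def zarSet (D K : Type*) [CommRing D] [Field K] [Algebra D K] : Set (ValuationSubring K) :=
  {V | ∀ d : D, algebraMap D K d ∈ V}

/-!
Let `p₀ < p₁ < p₂` be primes of a valuation overring `V` of `D` with the same contraction to `D`,
and let `W ≤ W' ≤ W''` be the localizations of `V` at `p₂`, `p₁`, `p₀`. Pick `a ∈ p₂ \ p₁` and
`b ∈ p₁ \ p₀`. In the value group of `W`, `b` is infinitely small compared with `a`, and every
element of `D` is either a unit of `W` or lies in the maximal ideal of `W''`. Comparing the values
of the monomials `a ^ i * t ^ j` then shows that `a` is not a unit of `D[a, t, t⁻¹]` for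
`t = a ^ n / b`, so some valuation ring `Z ⊇ D` contains `a ^ n / b` but no `a ^ k / b` with
`k < n`. Hence the opens `{Y | a ^ k / b ∈ Y for some k ≤ n}` of `Zar(D)` increase strictly, and
`Zar(D)` is not Noetherian.

So along a chain of primes of `V` the contraction to `D` increases strictly at every second step,
and also at the first step because nonzero primes of `V` contract to nonzero primes of `D`. This
gives `dim V ≤ 2 * dim D`.
-/

open ValuationSubring TopologicalSpace AddMonoidAlgebra

section ValueGroup

variable {Γ₀ : Type*} [LinearOrderedCommGroupWithZero Γ₀] {γ β : Γ₀}

lemma lt_zpow_of_forall_lt_pow (hγ0 : γ ≠ 0) (hγ : γ < 1) (h : ∀ n : ℕ, β < γ ^ n) (m : ℤ) :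
    β < γ ^ m := by
  rcases le_or_gt 0 m with hm | hm
  · lift m to ℕ using hm
    simpa using h m
  · exact (by simpa using h 0 : β < 1).trans (one_lt_zpow_of_neg₀ (zero_lt_iff.2 hγ0) hγ hm)

lemma eq_zero_of_zpow_mul_zpow_eq_one (hγ0 : γ ≠ 0) (hγ : γ < 1) (hβ0 : β ≠ 0)
    (h : ∀ n : ℕ, β < γ ^ n) {p q : ℤ} (hpq : γ ^ p * β ^ q = 1) : p = 0 ∧ q = 0 := by
  wlog hq : 0 ≤ q generalizing p q
  · have := this (p := -p) (q := -q) (by rw [zpow_neg, zpow_neg, ← mul_inv, hpq, inv_one])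
      (by omega)
    omega
  obtain rfl | hq := hq.eq_or_lt
  · simpa [zpow_eq_one_iff_right₀ zero_le hγ.ne] using hpq
  have hβq : β ^ q < γ ^ (-p) := calc
    β ^ q ≤ β ^ (1 : ℤ) :=
      zpow_le_zpow_right_of_le_one₀ (zero_lt_iff.2 hβ0) (by simpa using (h 0).le) hq
    _ < γ ^ (-p) := by simpa using lt_zpow_of_forall_lt_pow hγ0 hγ h (-p)
  have := mul_lt_mul_of_pos_left hβq (zpow_pos (zero_lt_iff.2 hγ0) p)
  rw [hpq, ← zpow_add₀ hγ0, add_neg_cancel, zpow_zero] at this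
  exact (lt_irrefl _ this).elim

end ValueGroup

section LaurentMonomial

variable {K : Type*} [Field K]

def laurentMonomial (a t : K) (e : ℤ × ℤ) : K := a ^ e.1 * t ^ e.2

lemma laurentMonomial_ne_zero {a t : K} (ha : a ≠ 0) (ht : t ≠ 0) (e : ℤ × ℤ) :
    laurentMonomial a t e ≠ 0 :=
  mul_ne_zero (zpow_ne_zero _ ha) (zpow_ne_zero _ ht)

lemma laurentMonomial_sub {a t : K} (ha : a ≠ 0) (ht : t ≠ 0) (e e' : ℤ × ℤ) :
    laurentMonomial a t (e - e') = laurentMonomial a t e / laurentMonomial a t e' := by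
  simp only [laurentMonomial, Prod.fst_sub, Prod.snd_sub, zpow_sub₀ ha, zpow_sub₀ ht]
  ring

/-- The range of `AddMonoidAlgebra.lift D K (ℕ × ℤ) (laurentMonomialHom a ht)` is `D[a, t, t⁻¹]`. -/
def laurentMonomialHom (a : K) {t : K} (ht : t ≠ 0) : Multiplicative (ℕ × ℤ) →* K where
  toFun m := laurentMonomial a t (m.toAdd.1, m.toAdd.2)
  map_one' := by simp [laurentMonomial]
  map_mul' m m' := by
    simp only [laurentMonomial, toAdd_mul, Prod.fst_add, Prod.snd_add, zpow_natCast, pow_add,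
      zpow_add₀ ht]
    ring

lemma laurentMonomial_mem_range (D : Type*) [CommRing D] [Algebra D K] (a : K) {t : K}
    (ht : t ≠ 0) (m : ℕ × ℤ) :
    laurentMonomial a t (m.1, m.2) ∈ (lift D K (ℕ × ℤ) (laurentMonomialHom a ht)).range :=
  ⟨single m 1, by simp [laurentMonomialHom]⟩

end LaurentMonomial

namespace ValuationSubring

variable {K : Type*} [Field K] {W W' W'' : ValuationSubring K} {a b t : K}

lemma valuation_lt_valuation_of_le (h : W ≤ W') {z u : K} (hz : W'.valuation z < 1)
    (hu : W'.valuation u = 1) : W.valuation z < W.valuation u := by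
  have hu0 : u ≠ 0 := by rintro rfl; simp at hu
  have : W'.valuation (z * u⁻¹) < 1 := by simpa [hu] using hz
  have := W.mem_nonunits_iff.1 (nonunits_le_nonunits.2 h (W'.mem_nonunits_iff.2 this))
  rwa [map_mul, map_inv₀, mul_inv_lt_iff₀ (zero_lt_iff.2 (by simpa using hu0)), one_mul] at this

lemma valuation_eq_one_of_le (h : W ≤ W') {x : K} (hx : W.valuation x = 1) :
    W'.valuation x = 1 := by
  have hx0 : x ≠ 0 := by rintro rfl; simp at hx
  exact unitGroup_le_unitGroup.2 h (x := Units.mk0 x hx0) hx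

lemma ofPrime_valuation_lt_one_iff (V : ValuationSubring K) (P : Ideal V) [P.IsPrime] (x : V) :
    (V.ofPrime P).valuation x < 1 ↔ x ∈ P := by
  rw [lt_iff_le_and_ne, ne_eq, ofPrime_valuation_eq_one_iff_mem_primeCompl,
    Ideal.mem_primeCompl_iff, not_not, and_iff_right_iff_imp]
  exact fun _ => ((V.ofPrime P).valuation_le_one_iff _).2 (V.le_ofPrime P x.2)

lemma valuation_laurentMonomial (W : ValuationSubring K) (a t : K) (e : ℤ × ℤ) :
    W.valuation (laurentMonomial a t e) = W.valuation a ^ e.1 * W.valuation t ^ e.2 := by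
  simp [laurentMonomial]

def ValuesIndependent (W : ValuationSubring K) (a t : K) : Prop :=
  ∀ e : ℤ × ℤ, W.valuation (laurentMonomial a t e) = 1 → e = 0

lemma valuesIndependent_of_le (hWW' : W ≤ W') (ha : W.valuation a < 1)
    (ha' : W'.valuation a = 1) (hb : W'.valuation b < 1) (hb0 : b ≠ 0) :
    W.ValuesIndependent a b := by
  have ha0 : W.valuation a ≠ 0 := by simpa using (show a ≠ 0 by rintro rfl; simp at ha')
  have hba (n : ℕ) : W.valuation b < W.valuation a ^ n := by
    simpa using valuation_lt_valuation_of_le hWW' hb (u := a ^ n) (by simp [ha'])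
  rintro ⟨p, q⟩ hpq
  rw [valuation_laurentMonomial] at hpq
  simpa using eq_zero_of_zpow_mul_zpow_eq_one ha0 ha (by simpa using hb0) hba hpq

lemma ValuesIndependent.laurentMonomial_right (h : W.ValuesIndependent a b) (ha : a ≠ 0)
    (m : ℤ) {n : ℤ} (hn : n ≠ 0) : W.ValuesIndependent a (laurentMonomial a b (m, n)) := by
  rintro ⟨p, q⟩ hpq
  have key : laurentMonomial a (laurentMonomial a b (m, n)) (p, q) =
      laurentMonomial a b (p + m * q, n * q) := by
    simp only [laurentMonomial, mul_zpow, ← zpow_mul, zpow_add₀ ha]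
    ring
  have := h _ (key ▸ hpq)
  simp only [Prod.mk_eq_zero, mul_eq_zero, hn, false_or] at this ⊢
  obtain ⟨h1, rfl⟩ := this
  simpa using h1

lemma ValuesIndependent.exists_valuation_sum_eq (hind : W.ValuesIndependent a t) (ha : a ≠ 0)
    (ht : t ≠ 0) {ι : Type*} {s : Finset ι} (hs : s.Nonempty) {c : ι → K}
    (hc : ∀ i ∈ s, W.valuation (c i) = 1) {e : ι → ℤ × ℤ} (he : Set.InjOn e s) :
    ∃ i ∈ s, W.valuation (∑ j ∈ s, c j * laurentMonomial a t (e j)) =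
      W.valuation (laurentMonomial a t (e i)) := by
  classical
  obtain ⟨i, hi, hmax⟩ := s.exists_max_image (fun j => W.valuation (laurentMonomial a t (e j))) hs
  have hterm : ∀ j ∈ s, W.valuation (c j * laurentMonomial a t (e j)) =
      W.valuation (laurentMonomial a t (e j)) := fun j hj => by rw [map_mul, hc j hj, one_mul]
  refine ⟨i, hi, ?_⟩
  rw [Valuation.map_sum_eq_of_lt _ hi, hterm i hi]
  intro j hj
  obtain ⟨hjs, hji⟩ : j ∈ s ∧ j ≠ i := by simpa using hj
  rw [hterm j hjs, hterm i hi]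
  refine (hmax j hjs).lt_of_ne fun hv => hji (he hjs hi (sub_eq_zero.1 (hind _ ?_)))
  rw [laurentMonomial_sub ha ht, map_div₀, hv,
    div_self ((Valuation.ne_zero_iff _).2 (laurentMonomial_ne_zero ha ht _))]

/-- The terms whose coefficient lies in the maximal ideal of `W''` are smaller, for `W`, than every
monomial, so the sum has the value of one of the monomials with a unit coefficient. -/
lemma ValuesIndependent.sum_ne_one (hind : W.ValuesIndependent a t) (hle : W ≤ W'')
    (ha : W''.valuation a = 1) (ht : W''.valuation t = 1) {ι : Type*} {s : Finset ι}
    {c : ι → K} (hc : ∀ i ∈ s, W''.valuation (c i) < 1 ∨ W.valuation (c i) = 1)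
    {e : ι → ℤ × ℤ} (he : Set.InjOn e s) (he0 : ∀ i ∈ s, e i ≠ 0) :
    ∑ i ∈ s, c i * laurentMonomial a t (e i) ≠ 1 := by
  classical
  intro hsum
  have hmono (e : ℤ × ℤ) : W''.valuation (laurentMonomial a t e) = 1 := by
    simp [valuation_laurentMonomial, ha, ht]
  have hsplit := s.sum_filter_add_sum_filter_not (fun i => W.valuation (c i) = 1)
    fun i => c i * laurentMonomial a t (e i)
  rw [hsum] at hsplit
  set s₁ := s.filter fun i => W.valuation (c i) = 1
  set s₂ := s.filter fun i => ¬W.valuation (c i) = 1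
  have hs₂ : W''.valuation (∑ i ∈ s₂, c i * laurentMonomial a t (e i)) < 1 := by
    refine Valuation.map_sum_lt' _ zero_lt_one fun i hi => ?_
    obtain ⟨his, hi⟩ := Finset.mem_filter.1 hi
    simpa [hmono] using (hc i his).resolve_right hi
  rcases s₁.eq_empty_or_nonempty with h₁ | h₁
  · rw [h₁, Finset.sum_empty, zero_add] at hsplit
    rw [hsplit, map_one] at hs₂
    exact lt_irrefl _ hs₂
  obtain ⟨i, hi, hv⟩ := hind.exists_valuation_sum_eq (by rintro rfl; simp at ha)
    (by rintro rfl; simp at ht) h₁ (fun i hi => (Finset.mem_filter.1 hi).2)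
    (he.mono (Finset.coe_subset.2 (Finset.filter_subset _ _)))
  have hlt := valuation_lt_valuation_of_le hle hs₂ (hmono (e i))
  rw [← hv] at hlt
  have := Valuation.map_add_eq_of_lt_left W.valuation hlt
  rw [hsplit, map_one, hv] at this
  exact he0 i (Finset.mem_filter.1 hi).1 (hind _ this.symm)

lemma ValuesIndependent.mul_ne_one_of_mem_range {D : Type*} [CommRing D] [Algebra D K]
    (hind : W.ValuesIndependent a t) (hle : W ≤ W'') (ha : W''.valuation a = 1)
    (ht : W''.valuation t = 1)
    (hD : ∀ d : D, W''.valuation (algebraMap D K d) < 1 ∨ W.valuation (algebraMap D K d) = 1)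
    (ht0 : t ≠ 0) {x : K} (hx : x ∈ (lift D K (ℕ × ℤ) (laurentMonomialHom a ht0)).range) :
    a * x ≠ 1 := by
  obtain ⟨f, rfl⟩ := (AlgHom.mem_range _).1 hx
  have hterm (m : ℕ × ℤ) :
      a * laurentMonomial a t (m.1, m.2) = laurentMonomial a t ((m.1 : ℤ) + 1, m.2) := by
    rw [laurentMonomial, laurentMonomial, zpow_add_one₀ (by rintro rfl; simp at ha)]
    ring
  rw [lift_apply', Finsupp.sum, Finset.mul_sum]
  simp only [laurentMonomialHom, MonoidHom.coe_mk, OneHom.coe_mk, toAdd_ofAdd, mul_left_comm a,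
    hterm]
  refine hind.sum_ne_one hle ha ht (fun m _ => hD _) (fun m _ m' _ h => ?_) (fun m _ h => ?_)
  · simp only [Prod.mk.injEq, add_left_inj, Nat.cast_inj] at h
    exact Prod.ext h.1 h.2
  · simp only [Prod.mk_eq_zero] at h
    omega

end ValuationSubring

lemma Subring.exists_valuationSubring_mem_nonunits {K : Type*} [Field K] {S : Subring K} {a : K}
    (ha : a ∈ S) (h : ∀ x ∈ S, a * x ≠ 1) :
    ∃ Z : ValuationSubring K, S ≤ Z.toSubring ∧ a ∈ Z.nonunits := by
  have hspan : Ideal.span {(⟨a, ha⟩ : S)} ≠ ⊤ := by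
    rw [Ne, Ideal.span_singleton_eq_top, isUnit_iff_exists_inv]
    rintro ⟨⟨x, hx⟩, hax⟩
    exact h x hx (congrArg Subtype.val hax)
  obtain ⟨Z, hSZ, hZ⟩ := Ideal.image_subset_nonunits_valuationSubring _ hspan
  exact ⟨Z, hSZ, hZ ⟨_, Ideal.mem_span_singleton_self _, rfl⟩⟩

lemma TopologicalSpace.not_noetherianSpace_of_mem_of_notMem {X : Type*} [TopologicalSpace X]
    {s : Set X} {U : ℕ → Set X} (hU : ∀ n, IsOpen (U n)) {y : ℕ → X} (hys : ∀ n, y n ∈ s)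
    (hyU : ∀ n, y n ∈ U n) (hyU' : ∀ n, ∀ k < n, y n ∉ U k) : ¬NoetherianSpace s := by
  intro h
  obtain ⟨F, hF⟩ := ((noetherianSpace_set_iff s).1 h (s ∩ ⋃ n, U n) Set.inter_subset_left)
    |>.elim_finite_subcover U hU fun x hx => hx.2
  obtain ⟨k, hk, hyk⟩ := Set.mem_iUnion₂.1
    (hF ⟨hys (F.sup id + 1), Set.mem_iUnion.2 ⟨_, hyU (F.sup id + 1)⟩⟩)
  exact hyU' _ k (Nat.lt_succ_of_le (Finset.le_sup (f := id) hk)) hyk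

section Chain

variable {D K : Type*} [CommRing D] [Field K] [Algebra D K] {W W' W'' : ValuationSubring K}
  {a b : K}

lemma exists_mem_zarSet_separating_pow_div (hW : W ∈ zarSet D K) (hWW' : W ≤ W')
    (hW'W'' : W' ≤ W'') (ha : W.valuation a < 1) (ha' : W'.valuation a = 1)
    (hb : W'.valuation b < 1) (hb'' : W''.valuation b = 1)
    (hD : ∀ d : D, W.valuation (algebraMap D K d) < 1 → W''.valuation (algebraMap D K d) < 1)
    (n : ℕ) : ∃ Z ∈ zarSet D K, a ^ n / b ∈ Z ∧ ∀ k < n, a ^ k / b ∉ Z := by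
  have ha0 : a ≠ 0 := by rintro rfl; simp at ha'
  have hb0 : b ≠ 0 := by rintro rfl; simp at hb''
  have ha'' : W''.valuation a = 1 := valuation_eq_one_of_le hW'W'' ha'
  set t := laurentMonomial a b (n, -1) with ht
  have htn : t = a ^ n / b := by simp [ht, laurentMonomial, div_eq_mul_inv]
  have ht0 : t ≠ 0 := laurentMonomial_ne_zero ha0 hb0 _
  have hind : W.ValuesIndependent a t :=
    (valuesIndependent_of_le hWW' ha ha' hb hb0).laurentMonomial_right ha0 n (by norm_num)
  have hDc (d : D) :
      W''.valuation (algebraMap D K d) < 1 ∨ W.valuation (algebraMap D K d) = 1 :=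
    ((W.valuation_le_one_iff _).2 (hW d)).lt_or_eq.imp_left (hD d)
  set S := (lift D K (ℕ × ℤ) (laurentMonomialHom a ht0)).range
  have hS := laurentMonomial_mem_range D a ht0
  obtain ⟨Z, hSZ, haZ⟩ := Subring.exists_valuationSubring_mem_nonunits (S := S.toSubring)
    (by simpa [S, laurentMonomial] using hS (1, 0))
    fun x hx => hind.mul_ne_one_of_mem_range (hWW'.trans hW'W'') ha''
      (by simp [ht, valuation_laurentMonomial, ha'', hb'']) hDc ht0 hx
  refine ⟨Z, fun d => hSZ (S.algebraMap_mem d),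
    htn ▸ hSZ (by simpa [S, laurentMonomial] using hS (0, 1)), fun k hk hkZ => ?_⟩
  have hpow : a ^ ((k : ℤ) - n) ∈ Z := by
    have htinv : t⁻¹ ∈ Z := hSZ (by simpa [S, laurentMonomial] using hS (0, -1))
    convert mul_mem hkZ htinv using 1
    rw [htn, zpow_sub₀ ha0, zpow_natCast, zpow_natCast]
    field_simp
  rw [← Z.valuation_le_one_iff, map_zpow₀] at hpow
  exact hpow.not_gt (one_lt_zpow_of_neg₀ ((Valuation.pos_iff _).2 ha0) (Z.mem_nonunits_iff.1 haZ)
    (by omega))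

lemma not_noetherianSpace_zarSet_of_le (hW : W ∈ zarSet D K) (hWW' : W ≤ W')
    (hW'W'' : W' ≤ W'') (ha : W.valuation a < 1) (ha' : W'.valuation a = 1)
    (hb : W'.valuation b < 1) (hb'' : W''.valuation b = 1)
    (hD : ∀ d : D, W.valuation (algebraMap D K d) < 1 → W''.valuation (algebraMap D K d) < 1) :
    ¬NoetherianSpace (zarSet D K) := by
  choose Z hZ hZn hZk using exists_mem_zarSet_separating_pow_div hW hWW' hW'W'' ha ha' hb hb'' hD
  exact not_noetherianSpace_of_mem_of_notMem
    (fun k => isOpen_generateFrom_of_mem ⟨a ^ k / b, rfl⟩) hZ hZn hZk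

lemma not_noetherianSpace_zarSet_of_comap_le {V : ValuationSubring K} {g : D →+* V}
    (hg : ∀ d, (g d : K) = algebraMap D K d) {p₀ p₁ p₂ : Ideal V} [p₀.IsPrime] [p₁.IsPrime]
    [p₂.IsPrime] (h01 : p₀ < p₁) (h12 : p₁ < p₂) (hcomap : p₂.comap g ≤ p₀.comap g) :
    ¬NoetherianSpace (zarSet D K) := by
  obtain ⟨a, ha₂, ha₁⟩ := SetLike.exists_of_lt h12
  obtain ⟨b, hb₁, hb₀⟩ := SetLike.exists_of_lt h01
  refine not_noetherianSpace_zarSet_of_le (W := V.ofPrime p₂) (a := a) (b := b)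
    (fun d => hg d ▸ V.le_ofPrime p₂ (g d).2) (V.ofPrime_le_of_le _ _ h12.le)
    (V.ofPrime_le_of_le _ _ h01.le) ((ofPrime_valuation_lt_one_iff _ _ _).2 ha₂)
    ((ofPrime_valuation_eq_one_iff_mem_primeCompl _ _ _).2 ha₁)
    ((ofPrime_valuation_lt_one_iff _ _ _).2 hb₁)
    ((ofPrime_valuation_eq_one_iff_mem_primeCompl _ _ _).2 hb₀) fun d hd => ?_
  rw [← hg d, ofPrime_valuation_lt_one_iff] at hd ⊢
  exact hcomap hd

end Chain

lemma Order.krullDim_le_two_mul_of_lt_of_lt {α β : Type*} [Preorder α] [OrderBot α] [Preorder β]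
    {f : α → β} (hbot : ∀ y, ⊥ < y → f ⊥ < f y)
    (hf : ∀ x y z, x < y → y < z → f x < f z) : krullDim α ≤ 2 * krullDim β := by
  refine iSup_le fun ℓ => ?_
  set k := (ℓ.length + 1) / 2
  -- the chain `⊥, ℓ 1, ℓ 3, ℓ 5, …` has image a chain of length `k` in `β`
  let c : Fin (k + 1) → α := fun j =>
    if (j : ℕ) = 0 then ⊥ else ℓ ⟨2 * j - 1, by omega⟩
  have hc : StrictMono (f ∘ c) := by
    refine Fin.strictMono_iff_lt_succ.2 fun j => ?_
    have hsucc : c j.succ = ℓ ⟨2 * j + 1, by omega⟩ := by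
      simp only [c, Fin.val_succ, Nat.add_eq_zero_iff, one_ne_zero, and_false, if_false]
      congr 2
    rw [Function.comp_apply, Function.comp_apply, hsucc]
    by_cases hj : (j : ℕ) = 0
    · rw [show c j.castSucc = ⊥ from if_pos hj]
      exact hbot _ ((bot_le (a := ℓ 0)).trans_lt (ℓ.strictMono (Fin.lt_def.2 (by simp))))
    · rw [show c j.castSucc = ℓ ⟨2 * j - 1, by omega⟩ from if_neg hj]
      exact hf _ (ℓ ⟨2 * j, by omega⟩) _ (ℓ.strictMono (Fin.mk_lt_mk.2 (by omega)))
        (ℓ.strictMono (Fin.mk_lt_mk.2 (by omega)))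
  have hk : (k : WithBot ℕ∞) ≤ krullDim β := LTSeries.length_le_krullDim (.mk k (f ∘ c) hc)
  calc (ℓ.length : WithBot ℕ∞) ≤ k + k := by exact_mod_cast (by omega : ℓ.length ≤ k + k)
    _ ≤ krullDim β + krullDim β := add_le_add hk hk
    _ = 2 * krullDim β := (two_mul _).symm

lemma IsFractionRing.comap_bot_lt_comap {D K A : Type*} [CommRing D] [IsDomain D] [Field K]
    [Algebra D K] [IsFractionRing D K] [CommRing A] [IsDomain A] {i : A →+* K}
    (hi : Function.Injective i) {g : D →+* A} (hg : i.comp g = algebraMap D K)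
    {q : PrimeSpectrum A} (hq : ⊥ < q) : PrimeSpectrum.comap g ⊥ < PrimeSpectrum.comap g q := by
  have hg_inj : Function.Injective g := .of_comp (f := i) <| by
    rw [← RingHom.coe_comp, hg]
    exact IsFractionRing.injective D K
  rw [← PrimeSpectrum.asIdeal_lt_asIdeal, PrimeSpectrum.asIdeal_bot] at hq
  rw [← PrimeSpectrum.asIdeal_lt_asIdeal, PrimeSpectrum.comap_asIdeal, PrimeSpectrum.comap_asIdeal,
    PrimeSpectrum.asIdeal_bot, Ideal.comap_bot_of_injective g hg_inj, bot_lt_iff_ne_bot]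
  obtain ⟨x, hxq, hx0⟩ := Submodule.exists_mem_ne_zero_of_ne_bot hq.ne'
  obtain ⟨n, d, hd, hnd⟩ := IsFractionRing.div_surjective D (i x)
  have hd0 : algebraMap D K d ≠ 0 := IsFractionRing.to_map_ne_zero_of_mem_nonZeroDivisors hd
  have hn : g n = x * g d := hi <| by
    rw [map_mul, ← RingHom.comp_apply, ← RingHom.comp_apply, hg, ← hnd, div_mul_cancel₀ _ hd0]
  refine (Submodule.ne_bot_iff _).2 ⟨n, ?_, fun hn0 => hx0 ?_⟩
  · rw [Ideal.mem_comap, hn]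
    exact q.asIdeal.mul_mem_right _ hxq
  · rw [hn0, map_zero, zero_div, eq_comm, map_eq_zero_iff _ hi] at hnd
    exact hnd

theorem stmt6 (D K : Type*) [CommRing D] [IsDomain D] [Field K] [Algebra D K]
    [IsFractionRing D K] (h : TopologicalSpace.NoetherianSpace (zarSet D K)) :
    ∀ V ∈ zarSet D K, ringKrullDim V ≤ 2 * ringKrullDim D := by
  intro V hV
  let g : D →+* V := (algebraMap D K).codRestrict V.toSubring hV
  have hg : ∀ d, (g d : K) = algebraMap D K d := fun _ => rfl
  refine Order.krullDim_le_two_mul_of_lt_of_lt (f := PrimeSpectrum.comap g)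
    (fun _ hq => IsFractionRing.comap_bot_lt_comap (i := V.subtype) Subtype.val_injective
      (RingHom.ext hg) hq)
    fun p₀ p₁ p₂ h01 h12 => ?_
  have hle : PrimeSpectrum.comap g p₀ ≤ PrimeSpectrum.comap g p₂ :=
    Ideal.comap_mono (h01.trans h12).le
  exact hle.lt_of_ne fun heq => not_noetherianSpace_zarSet_of_comap_le hg h01 h12
    (congrArg PrimeSpectrum.asIdeal heq).ge h
end

section
/- Let D be an integral domain, V a valuation overring of D, and suppose V is integral over a subring of the form D[x_1,...,x_n]_M localized at a maximal ideal M, with x_1,...,x_n in the fraction field of D. Then for every prime ideal P of D, there are at most two prime ideals of V lying over P. -/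
/-!
Contract a strict chain `X < Y < Z` of primes of `V` over `P` to `A = D[x₁,…,xₙ]`. It stays
strict, since `V` is integral over the localization `B = A_M` and localizing is injective on
primes, and it lies in the fiber of `Spec A` over `P`, which is the spectrum of the Noetherian
ring `κ(P) ⊗ A`. In a Noetherian ring the primes between the ends of a chain of length two are
never totally ordered: otherwise let `u` be the largest one below the top `z` and `a ∈ z \ u`;
then `z` is minimal over the bottom prime plus `(a)`, and Krull's principal ideal theorem
forbids the chain. But going up from `B` to `V` lifts every prime of `A` between the two
contractions to a prime of `V` above `X`, and the primes of the valuation ring `V` are totally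
ordered.
-/

open Ideal

namespace Ideal

variable {R : Type*} [CommRing R]

lemma map_quotientMk_lt_map_quotientMk {I J K : Ideal R} (hIJ : I ≤ J) (hJK : J < K) :
    J.map (Quotient.mk I) < K.map (Quotient.mk I) := by
  refine (map_mono hJK.le).lt_of_ne fun h => hJK.ne ?_
  rw [← comap_map_mk hIJ, h, comap_map_mk (hIJ.trans hJK.le)]

lemma one_lt_height_map_quotientMk {p₁ p₂ p₃ : Ideal R} [p₁.IsPrime] [p₂.IsPrime] [p₃.IsPrime]
    (h₁₂ : p₁ < p₂) (h₂₃ : p₂ < p₃) : 1 < (p₃.map (Quotient.mk p₁)).height := by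
  have := isPrime_map_quotientMk_of_isPrime h₁₂.le
  have := isPrime_map_quotientMk_of_isPrime (h₁₂.trans h₂₃).le
  have h₀ : (⊥ : Ideal (R ⧸ p₁)) < p₂.map (Quotient.mk p₁) := by
    simpa [map_quotient_self] using map_quotientMk_lt_map_quotientMk le_rfl h₁₂
  calc (1 : ℕ∞) < (⊥ : Ideal (R ⧸ p₁)).height + 1 + 1 := by norm_num
    _ ≤ (p₂.map (Quotient.mk p₁)).height + 1 := by
      gcongr; exact height_add_one_le_of_lt_of_isPrime h₀
    _ ≤ (p₃.map (Quotient.mk p₁)).height :=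
      height_add_one_le_of_lt_of_isPrime (map_quotientMk_lt_map_quotientMk h₁₂.le h₂₃)

end Ideal

theorem PrimeSpectrum.not_isChain_Icc_of_lt_of_lt {R : Type*} [CommRing R] [IsNoetherianRing R]
    {x y z : PrimeSpectrum R} (hxy : x < y) (hyz : y < z) : ¬ IsChain (· ≤ ·) (Set.Icc x z) := by
  intro hchain
  obtain ⟨u, ⟨hu, hyu, huz⟩, hmax⟩ := (wellFounded_gt (α := Ideal R)).has_min
    {I | I.IsPrime ∧ y.asIdeal ≤ I ∧ I < z.asIdeal} ⟨y.asIdeal, y.isPrime, le_rfl, hyz⟩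
  obtain ⟨a, haz, hau⟩ := SetLike.exists_of_lt huz
  have := hu
  have hu' : (⟨u, hu⟩ : PrimeSpectrum R) ∈ Set.Icc x z := ⟨hxy.le.trans hyu, huz.le⟩
  have hmin : z.asIdeal ∈ (x.asIdeal ⊔ span {a}).minimalPrimes := by
    refine ⟨⟨z.isPrime, sup_le (hxy.trans hyz).le (span_le.mpr (by simpa using haz))⟩, ?_⟩
    rintro q ⟨hq, hxq⟩ hqz
    have haq : a ∈ q := hxq (mem_sup_right (mem_span_singleton_self a))
    have hq' : (⟨q, hq⟩ : PrimeSpectrum R) ∈ Set.Icc x z := ⟨le_sup_left.trans hxq, hqz⟩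
    rcases hchain.total hq' hu' with hqu | huq
    · exact absurd (hqu haq) hau
    · by_contra hzq
      exact hmax q ⟨hq, hyu.trans huq, lt_of_le_of_ne hqz (fun h => hzq h.ge)⟩
        (lt_of_le_of_ne huq (by rintro rfl; exact hau haq))
  have : x.asIdeal < u := lt_of_lt_of_le hxy hyu
  exact (map_height_le_one_of_mem_minimalPrimes hmin).not_gt
    (one_lt_height_map_quotientMk this huz)

theorem Ideal.not_isChain_Icc_primesOver {R A : Type*} [CommRing R] [CommRing A] [Algebra R A]
    [Algebra.FiniteType R A] (p : Ideal R) [p.IsPrime] {x y z : p.primesOver A}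
    (hxy : x < y) (hyz : y < z) : ¬ IsChain (· ≤ ·) (Set.Icc x z) := by
  have := Algebra.FiniteType.isNoetherianRing p.ResidueField (p.Fiber A)
  let e := PrimeSpectrum.primesOverOrderIsoFiber R A p
  intro h
  refine PrimeSpectrum.not_isChain_Icc_of_lt_of_lt (e.strictMono hxy) (e.strictMono hyz) ?_
  rw [← e.image_Icc]
  exact h.image e

section LocalizationIntegral

variable {A : Type*} (B : Type*) {C : Type*} [CommRing A] [CommRing B] [CommRing C] [Algebra A B]
  [Algebra B C] [Algebra A C] [IsScalarTower A B C]

theorem Ideal.disjoint_under_of_isLocalization (S : Submonoid A) [IsLocalization S B]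
    (Z : Ideal C) [Z.IsPrime] : Disjoint (S : Set A) (Z.under A) := by
  rw [← under_under (B := B)]
  exact ((IsLocalization.isPrime_iff_isPrime_disjoint S B _).mp inferInstance).2

variable [Algebra.IsIntegral B C]

theorem Ideal.under_lt_under_of_isLocalization_of_isIntegral (S : Submonoid A)
    [IsLocalization S B] {X Y : Ideal C} [X.IsPrime] (h : X < Y) : X.under A < Y.under A := by
  rw [← under_under (B := B), ← under_under (B := B) Y]
  exact (IsLocalization.orderEmbedding S B).strictMono (IsIntegral.comap_lt_comap h)

theorem Ideal.exists_ideal_over_prime_of_isLocalization_of_isIntegral (S : Submonoid A)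
    [IsLocalization S B] (X : Ideal C) {q : Ideal A} [q.IsPrime] (hqS : Disjoint (S : Set A) q)
    (hXq : X.under A ≤ q) : ∃ W ≥ X, W.IsPrime ∧ W.under A = q := by
  have := IsLocalization.isPrime_of_isPrime_disjoint S B q inferInstance hqS
  have hXB : X.under B ≤ q.map (algebraMap A B) := by
    rw [← IsLocalization.map_under S B (X.under B), under_under]
    exact map_mono hXq
  obtain ⟨W, hXW, hW, hWq⟩ := exists_ideal_over_prime_of_isIntegral _ X hXB
  replace hWq : W.under B = q.map (algebraMap A B) := hWq
  refine ⟨W, hXW, hW, ?_⟩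
  rw [← under_under (B := B), hWq]
  exact IsLocalization.under_map_of_isPrime_disjoint S B inferInstance hqS

end LocalizationIntegral

theorem IsChain.eq_or_eq_or_eq_of_forall_not_lt_lt {α : Type*} [PartialOrder α] {s : Set α}
    (hs : IsChain (· ≤ ·) s) (h : ∀ x ∈ s, ∀ y ∈ s, ∀ z ∈ s, x < y → ¬ y < z) {a b c : α}
    (ha : a ∈ s) (hb : b ∈ s) (hc : c ∈ s) : a = b ∨ a = c ∨ b = c := by
  by_contra! ⟨hab, hac, hbc⟩
  have hlt : ∀ {x y}, x ∈ s → y ∈ s → x ≠ y → x < y ∨ y < x := fun hx hy hne =>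
    (hs.total hx hy).imp (lt_of_le_of_ne · hne) (lt_of_le_of_ne · hne.symm)
  rcases hlt ha hb hab with h₁ | h₁ <;> rcases hlt ha hc hac with h₂ | h₂ <;>
    rcases hlt hb hc hbc with h₃ | h₃ <;> grind

theorem Ideal.not_lt_lt_of_mem_primesOver {D A : Type*} (B : Type*) {C : Type*} [CommRing D]
    [CommRing A] [CommRing B] [CommRing C] [Algebra D A] [Algebra A B] [Algebra B C] [Algebra A C]
    [Algebra D C] [IsScalarTower A B C] [IsScalarTower D A C] [Algebra.FiniteType D A]
    (S : Submonoid A) [IsLocalization S B] [Algebra.IsIntegral B C]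
    (hC : IsChain (· ≤ ·) {I : Ideal C | I.IsPrime}) (P : Ideal D) [P.IsPrime]
    {X Y Z : Ideal C} (hX : X ∈ P.primesOver C) (hY : Y ∈ P.primesOver C)
    (hZ : Z ∈ P.primesOver C) (hXY : X < Y) : ¬ Y < Z := by
  intro hYZ
  have under_mem {W : Ideal C} (hW : W ∈ P.primesOver C) : W.under A ∈ P.primesOver A :=
    have := hW.1; have := hW.2
    ⟨inferInstance, LiesOver.tower_bot W (W.under A) P⟩
  have := hX.1; have := hY.1; have := hZ.1
  let x : P.primesOver A := ⟨X.under A, under_mem hX⟩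
  let z : P.primesOver A := ⟨Z.under A, under_mem hZ⟩
  have going_up : ∀ q ∈ Set.Icc x z, ∃ W : Ideal C, W.IsPrime ∧ W.under A = q.1 := by
    rintro q ⟨hxq, hqz⟩
    have := q.2.1
    obtain ⟨W, -, hW, hWq⟩ := exists_ideal_over_prime_of_isLocalization_of_isIntegral B S X
      ((disjoint_under_of_isLocalization B S Z).mono_right hqz) hxq
    exact ⟨W, hW, hWq⟩
  refine P.not_isChain_Icc_primesOver (x := x) (z := z) (y := ⟨Y.under A, under_mem hY⟩)
    (under_lt_under_of_isLocalization_of_isIntegral B S hXY)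
    (under_lt_under_of_isLocalization_of_isIntegral B S hYZ) ?_
  rintro q hq q' hq' -
  obtain ⟨W, hW, hWq⟩ := going_up q hq
  obtain ⟨W', hW', hWq'⟩ := going_up q' hq'
  change q.1 ≤ q'.1 ∨ q'.1 ≤ q.1
  rw [← hWq, ← hWq']
  exact (hC.total hW hW').imp comap_mono comap_mono

theorem Subring.isLocalization_of_mem_iff {A K : Type*} [CommRing A] [Field K] [Algebra A K]
    (B : Subring K) [Algebra A B] [IsScalarTower A B K]
    (hA : Function.Injective (algebraMap A K)) (S : Submonoid A) (hS : (0 : A) ∉ S)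
    (hB : ∀ z : K, z ∈ B ↔ ∃ a t : A, t ∈ S ∧ z * algebraMap A K t = algebraMap A K a) :
    IsLocalization S B := by
  have hAB (a : A) : (algebraMap A B a : K) = algebraMap A K a :=
    (IsScalarTower.algebraMap_apply A B K a).symm
  refine (isLocalization_iff _ _).mpr ⟨fun t => ?_, fun z => ?_, fun {x y} hxy => ?_⟩
  · have ht : algebraMap A K t ≠ 0 := (map_ne_zero_iff _ hA).mpr fun h => hS (h ▸ t.2)
    have hinv : (algebraMap A K t)⁻¹ ∈ B := (hB _).mpr ⟨1, t, t.2, by simp [ht]⟩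
    exact isUnit_iff_exists_inv.mpr ⟨⟨_, hinv⟩, Subtype.ext (by simp [hAB, ht])⟩
  · obtain ⟨a, t, ht, hzt⟩ := (hB z).mp z.2
    exact ⟨(a, ⟨t, ht⟩), Subtype.ext (by simpa [hAB] using hzt)⟩
  · refine ⟨1, congrArg _ (hA ?_)⟩
    simpa [hAB] using congrArg Subtype.val hxy

theorem stmt7_general (D K : Type*) [CommRing D] [Field K] [Algebra D K]
    (V : ValuationSubring K) (hDV : ∀ d : D, algebraMap D K d ∈ V)
    (s : Finset K) (M : Ideal (Algebra.adjoin D (s : Set K))) (hM : M.IsMaximal)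
    -- `B` is the localization `D[x₁,…,xₙ]_M` of the finitely generated algebra
    -- `A = D[x₁,…,xₙ] = Algebra.adjoin D s` at the maximal ideal `M`, inside `K`:
    (B : Subring K)
    (hB : ∀ z : K, z ∈ B ↔
      ∃ a t : Algebra.adjoin D (s : Set K), t ∉ M ∧ z * (t : K) = (a : K))
    -- `V` contains `B` and is integral over `B`:
    (hBV : B ≤ V.toSubring)
    (hint : ∀ x : K, x ∈ V → IsIntegral B x) :
    -- then at most two primes of `V` lie over any prime `P` of `D`:
    ∀ P : Ideal D, P.IsPrime →
      ∀ Q₁ Q₂ Q₃ : Ideal V.toSubring, Q₁.IsPrime → Q₂.IsPrime → Q₃.IsPrime →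
        Q₁.comap ((algebraMap D K).codRestrict V.toSubring hDV) = P →
        Q₂.comap ((algebraMap D K).codRestrict V.toSubring hDV) = P →
        Q₃.comap ((algebraMap D K).codRestrict V.toSubring hDV) = P →
        Q₁ = Q₂ ∨ Q₁ = Q₃ ∨ Q₂ = Q₃ := by
  classical
  intro P hP Q₁ Q₂ Q₃ h₁ h₂ h₃ e₁ e₂ e₃
  let A := Algebra.adjoin D (s : Set K)
  have := hM.isPrime
  have hAB (a : A) : (a : K) ∈ B := (hB a).mpr ⟨a, 1, M.primeCompl.one_mem, by simp⟩
  let _ : Algebra A B := (A.val.toRingHom.codRestrict B hAB).toAlgebra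
  let _ : Algebra B V.toSubring := (Subring.inclusion hBV).toAlgebra
  let _ : Algebra A V.toSubring := ((algebraMap B V.toSubring).comp (algebraMap A B)).toAlgebra
  let _ : Algebra D V.toSubring := ((algebraMap D K).codRestrict V.toSubring hDV).toAlgebra
  have : IsScalarTower A B K := .of_algebraMap_eq fun _ => rfl
  have : IsScalarTower B V.toSubring K := .of_algebraMap_eq fun _ => rfl
  have : IsScalarTower A B V.toSubring := .of_algebraMap_eq fun _ => rfl
  have : IsScalarTower D A V.toSubring := .of_algebraMap_eq fun _ => rfl
  have : Algebra.FiniteType D A :=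
    (Subalgebra.fg_iff_finiteType _).mp (Subalgebra.fg_adjoin_finset _)
  have : IsLocalization M.primeCompl B :=
    B.isLocalization_of_mem_iff Subtype.val_injective _ (fun h => h M.zero_mem) hB
  have : Algebra.IsIntegral B V.toSubring := ⟨fun x =>
    (isIntegral_algHom_iff (IsScalarTower.toAlgHom B V.toSubring K) Subtype.val_injective).mp
      (hint x x.2)⟩
  have hV : IsChain (· ≤ ·) {I : Ideal V.toSubring | I.IsPrime} :=
    have : ValuationRing V.toSubring := inferInstanceAs (ValuationRing V)
    fun I _ J _ _ => le_total I J
  exact (hV.mono fun _ hQ => hQ.1).eq_or_eq_or_eq_of_forall_not_lt_lt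
    (fun X hX Y hY Z hZ => Ideal.not_lt_lt_of_mem_primesOver B M.primeCompl hV P hX hY hZ)
    ⟨h₁, ⟨e₁.symm⟩⟩ ⟨h₂, ⟨e₂.symm⟩⟩ ⟨h₃, ⟨e₃.symm⟩⟩

theorem stmt7 (D K : Type*) [CommRing D] [IsDomain D] [Field K] [Algebra D K]
    [IsFractionRing D K] (V : ValuationSubring K) (hDV : ∀ d : D, algebraMap D K d ∈ V)
    (s : Finset K) (M : Ideal (Algebra.adjoin D (s : Set K))) (hM : M.IsMaximal)
    -- `B` is the localization `D[x₁,…,xₙ]_M` of the finitely generated algebra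
    -- `A = D[x₁,…,xₙ] = Algebra.adjoin D s` at the maximal ideal `M`, inside `K`:
    (B : Subring K)
    (hB : ∀ z : K, z ∈ B ↔
      ∃ a t : Algebra.adjoin D (s : Set K), t ∉ M ∧ z * (t : K) = (a : K))
    -- `V` contains `B` and is integral over `B`:
    (hBV : B ≤ V.toSubring)
    (hint : ∀ x : K, x ∈ V → IsIntegral B x) :
    -- then at most two primes of `V` lie over any prime `P` of `D`:
    ∀ P : Ideal D, P.IsPrime →
      ∀ Q₁ Q₂ Q₃ : Ideal V.toSubring, Q₁.IsPrime → Q₂.IsPrime → Q₃.IsPrime →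
        Q₁.comap ((algebraMap D K).codRestrict V.toSubring hDV) = P →
        Q₂.comap ((algebraMap D K).codRestrict V.toSubring hDV) = P →
        Q₃.comap ((algebraMap D K).codRestrict V.toSubring hDV) = P →
        Q₁ = Q₂ ∨ Q₁ = Q₃ ∨ Q₂ = Q₃ :=
  stmt7_general D K V hDV s M hM B hB hBV hint
end

section
/- Let D be a local integral domain with infinitely many height-one prime ideals. Then the Zariski space Zar(D) is not a Noetherian topological space. -/
open IsLocalRing

lemma zar_isOpen_basic {K : Type*} [Field K] (x : K) :
    IsOpen {V : ValuationSubring K | x ∈ V} :=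
  TopologicalSpace.isOpen_generateFrom_of_mem ⟨x, rfl⟩

lemma vsub_comp {K : Type*} [Field K] {W A B : ValuationSubring K}
    (hA : W ≤ A) (hB : W ≤ B) : A ≤ B ∨ B ≤ A := by
  by_contra hc
  push_neg at hc
  obtain ⟨h1, h2⟩ := hc
  rw [SetLike.not_le_iff_exists] at h1 h2
  obtain ⟨a, haA, haB⟩ := h1
  obtain ⟨b, hbB, hbA⟩ := h2
  have ha0 : (a : K) ≠ 0 := fun h => haB (h ▸ zero_mem _)
  have hb0 : (b : K) ≠ 0 := fun h => hbA (h ▸ zero_mem _)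
  rcases W.mem_or_inv_mem ((a : K) / (b : K)) with h | h
  · apply haB
    have := mul_mem (hB h) hbB
    rwa [div_mul_cancel₀ (a : K) hb0] at this
  · rw [inv_div] at h
    apply hbA
    have := mul_mem (hA h) haA
    rwa [div_mul_cancel₀ (b : K) ha0] at this

section Pair

variable {D K : Type*} [CommRing D] [IsDomain D] [IsLocalRing D] [Field K] [Algebra D K]
  [IsFractionRing D K]

lemma exists_pair (P : Ideal D) (hP : P.IsPrime) :
    ∃ W V' : ValuationSubring K,
      (∀ d : D, algebraMap D K d ∈ W) ∧ W ≤ V' ∧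
      (∀ d : D, d ≠ 0 → ¬ IsUnit d → (algebraMap D K d)⁻¹ ∉ W) ∧
      (∀ d : D, d ≠ 0 → (d ∈ P ↔ (algebraMap D K d)⁻¹ ∉ V')) := by
  haveI := hP
  have hg : ∀ y : P.primeCompl, IsUnit (algebraMap D K y) := by
    intro y
    have hy0 : (y : D) ≠ 0 := fun h => y.2 (h ▸ P.zero_mem)
    exact isUnit_iff_ne_zero.mpr
      ((map_ne_zero_iff _ (IsFractionRing.injective D K)).mpr hy0)
  set f : Localization.AtPrime P →+* K := IsLocalization.lift hg with hf
  obtain ⟨V₁, h₁, hloc₁⟩ := IsLocalRing.exists_factor_valuationRing f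
  set R1 := V₁.toSubring
  haveI : IsLocalRing R1 := V₁.isLocalRing
  set F : Localization.AtPrime P →+* R1 := f.codRestrict V₁.toSubring h₁ with hF
  set ρ : R1 →+* ResidueField R1 := IsLocalRing.residue R1 with hρ
  set ψ : D →+* ResidueField R1 := ρ.comp (F.comp (algebraMap D (Localization.AtPrime P)))
    with hψ
  -- facts about units/nonunits along the first stage
  have hunit1 : ∀ d : D, d ∉ P → IsUnit (F (algebraMap D (Localization.AtPrime P) d)) := by
    intro d hd
    exact ((IsLocalization.AtPrime.isUnit_to_map_iff (Localization.AtPrime P) P d).mpr hd).map F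
  have hnon1 : ∀ d : D, d ∈ P → ¬ IsUnit (F (algebraMap D (Localization.AtPrime P) d)) := by
    intro d hd hu
    exact ((IsLocalization.AtPrime.isUnit_to_map_iff (Localization.AtPrime P) P d).mp
      (hloc₁.1 _ hu)) hd
  have hψ0 : ∀ d : D, d ∈ P → ψ d = 0 := by
    intro d hd
    exact Ideal.Quotient.eq_zero_iff_mem.mpr ((mem_maximalIdeal _).mpr (hnon1 d hd))
  set ψq : D ⧸ P →+* ResidueField R1 := Ideal.Quotient.lift P ψ hψ0 with hψq
  haveI : IsLocalRing (D ⧸ P) := by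
    haveI : Nontrivial (D ⧸ P) := Ideal.Quotient.nontrivial_iff.mpr hP.ne_top
    exact IsLocalRing.of_surjective' (Ideal.Quotient.mk P) Ideal.Quotient.mk_surjective
  obtain ⟨V₂, h₂, hloc₂⟩ := IsLocalRing.exists_factor_valuationRing ψq
  -- abbreviations
  set xt : D → R1 := fun d => F (algebraMap D (Localization.AtPrime P) d) with hxt
  have hval : ∀ d : D, ((xt d : K)) = algebraMap D K d := fun d => IsLocalization.lift_eq hg d
  have hρxt : ∀ d : D, ρ (xt d) = ψq (Ideal.Quotient.mk P d) := by
    intro d; simp [hxt, hψq, hψ]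
  -- the composite valuation ring W
  have memiff : ∀ x : K, x ∈ (V₂.toSubring.comap ρ).map R1.subtype ↔
      ∃ y : R1, ρ y ∈ V₂ ∧ (y : K) = x := by
    intro x
    constructor
    · rintro ⟨y, hy, rfl⟩; exact ⟨y, hy, rfl⟩
    · rintro ⟨y, hy, rfl⟩; exact ⟨y, hy, rfl⟩
  have hmoi : ∀ x : K, x ∈ (V₂.toSubring.comap ρ).map R1.subtype ∨
      x⁻¹ ∈ (V₂.toSubring.comap ρ).map R1.subtype := by
    intro x
    by_cases hx : x ∈ V₁
    · rcases V₂.mem_or_inv_mem (ρ ⟨x, hx⟩) with h | h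
      · exact Or.inl ((memiff x).mpr ⟨⟨x, hx⟩, h, rfl⟩)
      · by_cases hu : IsUnit (⟨x, hx⟩ : R1)
        · obtain ⟨u, hu⟩ := hu
          refine Or.inr ((memiff x⁻¹).mpr ⟨((u⁻¹ : R1ˣ) : R1), ?_, ?_⟩)
          · have h1 : ρ ⟨x, hx⟩ * ρ ((u⁻¹ : R1ˣ) : R1) = 1 := by
              rw [← map_mul, ← hu, u.mul_inv, map_one]
            exact (inv_eq_of_mul_eq_one_right h1) ▸ h
          · have h1 : (⟨x, hx⟩ : R1) * ((u⁻¹ : R1ˣ) : R1) = 1 := by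
              rw [← hu]; exact u.mul_inv
            have h2 : x * (((u⁻¹ : R1ˣ) : R1) : K) = 1 := congrArg Subtype.val h1
            exact (inv_eq_of_mul_eq_one_right h2).symm
        · have h0 : ρ ⟨x, hx⟩ = 0 :=
            Ideal.Quotient.eq_zero_iff_mem.mpr ((mem_maximalIdeal _).mpr hu)
          exact Or.inl ((memiff x).mpr ⟨⟨x, hx⟩, by rw [h0]; exact zero_mem _, rfl⟩)
    · have hx' : x⁻¹ ∈ V₁ := (V₁.mem_or_inv_mem x).resolve_left hx
      have hnu : ¬ IsUnit (⟨x⁻¹, hx'⟩ : R1) := by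
        intro hu
        obtain ⟨u, hu⟩ := hu
        have hx0 : x ≠ 0 := fun h => hx (h ▸ zero_mem _)
        have h1 : (⟨x⁻¹, hx'⟩ : R1) * ((u⁻¹ : R1ˣ) : R1) = 1 := by
          rw [← hu]; exact u.mul_inv
        have h2 : x⁻¹ * (((u⁻¹ : R1ˣ) : R1) : K) = 1 := congrArg Subtype.val h1
        have h3 : (((u⁻¹ : R1ˣ) : R1) : K) = x := by
          have h4 := inv_eq_of_mul_eq_one_right h2
          rw [inv_inv] at h4
          exact h4.symm
        exact hx (h3 ▸ ((u⁻¹ : R1ˣ) : R1).2)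
      have h0 : ρ ⟨x⁻¹, hx'⟩ = 0 :=
        Ideal.Quotient.eq_zero_iff_mem.mpr ((mem_maximalIdeal _).mpr hnu)
      exact Or.inr ((memiff x⁻¹).mpr ⟨⟨x⁻¹, hx'⟩, by rw [h0]; exact zero_mem _, rfl⟩)
  refine ⟨⟨(V₂.toSubring.comap ρ).map R1.subtype, hmoi⟩, V₁, ?_, ?_, ?_, ?_⟩
  · -- D ⊆ W
    intro d
    refine (memiff _).mpr ⟨xt d, ?_, hval d⟩
    rw [hρxt d]; exact h₂ _
  · -- W ≤ V₁
    rintro x hx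
    obtain ⟨y, _, rfl⟩ := (memiff _).mp hx
    exact y.2
  · -- center of W contains the maximal ideal
    intro d hd0 hdu hmem
    obtain ⟨y, hyV, hyval⟩ := (memiff _).mp hmem
    have hK0 : algebraMap D K d ≠ 0 :=
      (map_ne_zero_iff _ (IsFractionRing.injective D K)).mpr hd0
    have hprod : (xt d) * y = 1 := by
      apply Subtype.ext
      show ((xt d) : K) * (y : K) = 1
      rw [hval d, hyval, mul_inv_cancel₀ hK0]
    have hρprod : ρ (xt d) * ρ y = 1 := by rw [← map_mul, hprod, map_one]
    by_cases hdP : d ∈ P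
    · have h0 : ρ (xt d) = 0 := by
        rw [hρxt d, hψq, Ideal.Quotient.lift_mk P ψ hψ0]
        exact hψ0 d hdP
      rw [h0, zero_mul] at hρprod
      exact zero_ne_one hρprod
    · -- d is a nonunit not in P : second stage
      have hmk : ¬ IsUnit (Ideal.Quotient.mk P d) := by
        intro hu
        obtain ⟨c, hc⟩ := isUnit_iff_exists_inv.mp hu
        obtain ⟨c', rfl⟩ := Ideal.Quotient.mk_surjective c
        have : Ideal.Quotient.mk P (d * c' - 1) = 0 := by
          rw [map_sub, map_mul, hc, map_one, sub_self]
        have hP1 : d * c' - 1 ∈ P := Ideal.Quotient.eq_zero_iff_mem.mp this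
        have hdm : d * c' ∈ maximalIdeal D :=
          Ideal.mul_mem_right _ _ ((mem_maximalIdeal d).mpr hdu)
        have h1m : (1 : D) ∈ maximalIdeal D := by
          have := Submodule.sub_mem _ hdm (IsLocalRing.le_maximalIdeal hP.ne_top hP1)
          simpa using this
        exact ((mem_maximalIdeal 1).mp h1m) isUnit_one
      apply hmk
      apply hloc₂.1 (a := Ideal.Quotient.mk P d)
      apply isUnit_iff_exists_inv.mpr
      refine ⟨⟨ρ y, hyV⟩, Subtype.ext ?_⟩
      show ψq (Ideal.Quotient.mk P d) * ρ y = 1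
      rw [← hρxt d]; exact hρprod
  · -- center of V₁ is P
    intro d hd0
    have hK0 : algebraMap D K d ≠ 0 :=
      (map_ne_zero_iff _ (IsFractionRing.injective D K)).mpr hd0
    constructor
    · intro hdP hin
      apply hnon1 d hdP
      apply isUnit_iff_exists_inv.mpr
      refine ⟨⟨(algebraMap D K d)⁻¹, hin⟩, Subtype.ext ?_⟩
      show ((xt d) : K) * (algebraMap D K d)⁻¹ = (1 : K)
      rw [hval d]
      exact mul_inv_cancel₀ hK0
    · intro hnin
      by_contra hdP
      obtain ⟨u, hu⟩ := hunit1 d hdP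
      apply hnin
      have h1 : F (algebraMap D (Localization.AtPrime P) d) * ((u⁻¹ : R1ˣ) : R1) = 1 := by
        rw [← hu]; exact u.mul_inv
      have h2 : (algebraMap D K d) * (((u⁻¹ : R1ˣ) : R1) : K) = 1 := by
        have h2' := congrArg (Subtype.val) h1
        simp only [MulMemClass.coe_mul, OneMemClass.coe_one] at h2'
        rw [← hval d]
        exact h2'
      have h3 := inv_eq_of_mul_eq_one_right h2
      rw [h3]
      exact ((u⁻¹ : R1ˣ) : R1).2


end Pair

theorem stmt10 (D K : Type*) [CommRing D] [IsDomain D] [IsLocalRing D] [Field K] [Algebra D K]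
    [IsFractionRing D K]
    -- `D` has infinitely many height-one primes:
    (h1 : {P : Ideal D | P.IsPrime ∧ P ≠ ⊥ ∧
      ∀ Q : Ideal D, Q.IsPrime → Q < P → Q = ⊥}.Infinite) :
    ¬ TopologicalSpace.NoetherianSpace (zarSet D K) := by
  intro hNoeth
  classical
  haveI := hNoeth
  set Δ : Set (Ideal D) := {P : Ideal D | P.IsPrime ∧ P ≠ ⊥ ∧
      ∀ Q : Ideal D, Q.IsPrime → Q < P → Q = ⊥} with hΔ
  haveI : Infinite ↥Δ := h1.to_subtype
  set s : Set ↥(zarSet D K) :=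
    {V | ∀ d : D, d ≠ 0 → ¬ IsUnit d →
      (algebraMap D K d)⁻¹ ∉ ((V : ↥(zarSet D K)) : ValuationSubring K)} with hs
  haveI : TopologicalSpace.NoetherianSpace ↥s := TopologicalSpace.NoetherianSpace.set s
  have key : ∀ p : ↥Δ, ∃ W V' : ValuationSubring K,
      (∀ d : D, algebraMap D K d ∈ W) ∧ W ≤ V' ∧
      (∀ d : D, d ≠ 0 → ¬ IsUnit d → (algebraMap D K d)⁻¹ ∉ W) ∧
      (∀ d : D, d ≠ 0 → (d ∈ p.1 ↔ (algebraMap D K d)⁻¹ ∉ V')) :=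
    fun p => exists_pair p.1 p.2.1
  choose W V' hDW hle hcW hcV using key
  set pt : ↥Δ → ↥s := fun p => ⟨⟨W p, fun d => hDW p d⟩,
    fun d hd0 hdu => hcW p d hd0 hdu⟩ with hpt
  haveI : Finite ↥(irreducibleComponents ↥s) :=
    (TopologicalSpace.NoetherianSpace.finite_irreducibleComponents).to_subtype
  obtain ⟨p, q, hpq, hfe⟩ := Finite.exists_ne_map_eq_of_infinite
    (fun r : ↥Δ => (⟨irreducibleComponent (pt r),
      irreducibleComponent_mem_irreducibleComponents _⟩ : ↥(irreducibleComponents ↥s)))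
  set C : Set ↥s := irreducibleComponent (pt p) with hC
  have hCirr : IsIrreducible C := isIrreducible_irreducibleComponent
  have hpC : pt p ∈ C := mem_irreducibleComponent
  have hcompeq : irreducibleComponent (pt p) = irreducibleComponent (pt q) :=
    congrArg Subtype.val hfe
  have hqC : pt q ∈ C := by
    rw [hC, hcompeq]; exact mem_irreducibleComponent
  -- directedness of C
  have hcont : Continuous (fun v : ↥s => ((v : ↥(zarSet D K)) : ValuationSubring K)) :=
    continuous_subtype_val.comp continuous_subtype_val
  have hdir : ∀ x y : K, (∃ v ∈ C, x ∈ ((v : ↥(zarSet D K)) : ValuationSubring K)) →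
      (∃ v ∈ C, y ∈ ((v : ↥(zarSet D K)) : ValuationSubring K)) →
      ∃ v ∈ C, x ∈ ((v : ↥(zarSet D K)) : ValuationSubring K) ∧
        y ∈ ((v : ↥(zarSet D K)) : ValuationSubring K) := by
    rintro x y ⟨vx, hvx, hx⟩ ⟨vy, hvy, hy⟩
    have h := hCirr.2
      ((fun v : ↥s => ((v : ↥(zarSet D K)) : ValuationSubring K)) ⁻¹' {V | x ∈ V})
      ((fun v : ↥s => ((v : ↥(zarSet D K)) : ValuationSubring K)) ⁻¹' {V | y ∈ V})
      ((zar_isOpen_basic x).preimage hcont) ((zar_isOpen_basic y).preimage hcont)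
      ⟨vx, hvx, hx⟩ ⟨vy, hvy, hy⟩
    obtain ⟨v, hvC, hv1, hv2⟩ := h
    exact ⟨v, hvC, hv1, hv2⟩
  -- the union of C is a valuation subring
  set A : ValuationSubring K :=
    { carrier := {x : K | ∃ v ∈ C, x ∈ ((v : ↥(zarSet D K)) : ValuationSubring K)}
      one_mem' := ⟨pt p, hpC, one_mem _⟩
      zero_mem' := ⟨pt p, hpC, zero_mem _⟩
      add_mem' := by
        intro x y hx hy
        obtain ⟨v, hv, h1, h2⟩ := hdir x y hx hy
        exact ⟨v, hv, add_mem h1 h2⟩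
      mul_mem' := by
        intro x y hx hy
        obtain ⟨v, hv, h1, h2⟩ := hdir x y hx hy
        exact ⟨v, hv, mul_mem h1 h2⟩
      neg_mem' := by
        rintro x ⟨v, hv, h⟩
        exact ⟨v, hv, neg_mem h⟩
      mem_or_inv_mem' := by
        intro x
        by_cases hx : ∃ v ∈ C, x ∈ ((v : ↥(zarSet D K)) : ValuationSubring K)
        · exact Or.inl hx
        · refine Or.inr ⟨pt p, hpC, ?_⟩
          have hx' : x ∉ W p := fun h => hx ⟨pt p, hpC, h⟩
          exact ((W p).mem_or_inv_mem x).resolve_left hx' } with hA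
  have hA1 : ∀ v, v ∈ C → ∀ x : K, x ∈ ((v : ↥(zarSet D K)) : ValuationSubring K) → x ∈ A :=
    fun v hv x hx => ⟨v, hv, hx⟩
  have hA2 : ∀ d : D, d ≠ 0 → ¬ IsUnit d → (algebraMap D K d)⁻¹ ∉ A := by
    rintro d h0 hu ⟨v, hv, h⟩
    exact v.2 d h0 hu h
  have hne : p.1 ≠ q.1 := fun h => hpq (Subtype.ext h)
  have hPm : ∀ r t : ↥Δ, r.1 ≠ t.1 → r.1 ≠ maximalIdeal D := by
    intro r t hrt hr
    have hle' : t.1 ≤ maximalIdeal D := le_maximalIdeal t.2.1.ne_top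
    rw [← hr] at hle'
    have hlt : t.1 < r.1 := lt_of_le_of_ne hle' (fun h => hrt h.symm)
    exact t.2.2.1 (r.2.2.2 t.1 t.2.1 hlt)
  have hAV : ∀ r : ↥Δ, pt r ∈ C → r.1 ≠ maximalIdeal D → A ≤ V' r := by
    intro r hrC hrm
    have hWA : W r ≤ A := fun x hx => hA1 (pt r) hrC x hx
    rcases vsub_comp hWA (hle r) with h | h
    · exact h
    · exfalso
      have hlt : r.1 < maximalIdeal D :=
        lt_of_le_of_ne (le_maximalIdeal r.2.1.ne_top) hrm
      obtain ⟨d, hdm, hdP⟩ := SetLike.exists_of_lt hlt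
      have hd0 : d ≠ 0 := fun h2 => hdP (h2 ▸ zero_mem _)
      have hdin : (algebraMap D K d)⁻¹ ∈ V' r := by
        by_contra hnin
        exact hdP ((hcV r d hd0).mpr hnin)
      exact hA2 d hd0 ((mem_maximalIdeal d).mp hdm) (h hdin)
  have hAp : A ≤ V' p := hAV p hpC (hPm p q hne)
  have hAq : A ≤ V' q := hAV q hqC (hPm q p (fun h2 => hne h2.symm))
  have hnle1 : ¬ p.1 ≤ q.1 := by
    intro h
    exact p.2.2.1 (q.2.2.2 p.1 p.2.1 (lt_of_le_of_ne h hne))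
  have hnle2 : ¬ q.1 ≤ p.1 := by
    intro h
    exact q.2.2.1 (p.2.2.2 q.1 q.2.1 (lt_of_le_of_ne h (fun h2 => hne h2.symm)))
  obtain ⟨d, hdp, hdq⟩ := SetLike.not_le_iff_exists.mp hnle1
  obtain ⟨e, heq, hep⟩ := SetLike.not_le_iff_exists.mp hnle2
  have hd0 : d ≠ 0 := fun h => hdq (h ▸ zero_mem _)
  have he0 : e ≠ 0 := fun h => hep (h ▸ zero_mem _)
  have crux : ∀ r : ↥Δ, A ≤ V' r → ∀ a b : D, a ≠ 0 → b ≠ 0 → a ∉ r.1 → b ∈ r.1 →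
      (algebraMap D K a) / (algebraMap D K b) ∈ A → False := by
    intro r hAr a b ha0 hb0 haP hbP hrat
    have hKa0 : algebraMap D K a ≠ 0 :=
      (map_ne_zero_iff _ (IsFractionRing.injective D K)).mpr ha0
    have hain : (algebraMap D K a)⁻¹ ∈ V' r := by
      by_contra hnin
      exact haP ((hcV r a ha0).mpr hnin)
    have hbnin : (algebraMap D K b)⁻¹ ∉ V' r := (hcV r b hb0).mp hbP
    apply hbnin
    have hmul := mul_mem hain (hAr hrat)
    rwa [show (algebraMap D K a)⁻¹ * ((algebraMap D K a) / (algebraMap D K b)) =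
      (algebraMap D K b)⁻¹ by
        rw [div_eq_mul_inv, ← mul_assoc, inv_mul_cancel₀ hKa0, one_mul]] at hmul
  rcases A.mem_or_inv_mem ((algebraMap D K d) / (algebraMap D K e)) with h | h
  · exact crux q hAq d e hd0 he0 hdq heq h
  · rw [inv_div] at h
    exact crux p hAp e d he0 hd0 hep hdp h
end

section
/- Let F ⊆ L be a field extension of transcendence degree strictly greater than 1. Then the space Zar(L|F) of valuation subrings of L containing F is not a Noetherian topological space. -/
/-!
Let `x, y` be algebraically independent over `F`. For each `n`, the elements `w = x^(n+1)/y` and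
`s = y/x^n` generate an `F`-algebra containing `x = w s` and `y = s^(n+1) w^n`, so they are again
algebraically independent, and a valuation ring of `L` centred at the origin of `F[w, s]` contains
`x^i/y` exactly when `n < i`. Hence the open sets `{V | x^i/y ∈ V for some i ≤ n}` form a strictly
increasing chain in `Zar(L|F)`.
-/

theorem AlgebraicIndependent.of_range_subset_adjoin {F L ι : Type*} [Field F] [CommRing L]
    [IsDomain L] [Algebra F L] [Finite ι] {x y : ι → L} (hx : AlgebraicIndependent F x)
    (hxy : Set.range x ⊆ Algebra.adjoin F (Set.range y)) : AlgebraicIndependent F y := by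
  set S := Algebra.adjoin F (Set.range y)
  let y' : ι → S := fun j => ⟨y j, Algebra.subset_adjoin ⟨j, rfl⟩⟩
  have hx' : AlgebraicIndependent F fun i => (⟨x i, hxy ⟨i, rfl⟩⟩ : S) := .of_comp S.val hx
  have hy'_top : Algebra.adjoin F (Set.range y') = ⊤ := by
    convert Algebra.adjoin_adjoin_coe_preimage (R := F) (s := Set.range y)
    ext ⟨a, ha⟩
    simp [y', Subtype.ext_iff]
  have : Algebra.IsAlgebraic (Algebra.adjoin F (Set.range y')) S :=
    ⟨fun a => isAlgebraic_algebraMap (⟨a, hy'_top ▸ trivial⟩ : Algebra.adjoin F (Set.range y'))⟩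
  have hy' : IsTranscendenceBasis F y' :=
    Algebra.IsAlgebraic.isTranscendenceBasis_of_lift_le_trdeg_of_finite F y'
      hx'.lift_cardinalMk_le_trdeg
  exact hy'.1.map' (f := S.val) Subtype.val_injective

theorem AlgebraicIndependent.exists_valuationSubring_range_subset_nonunits {F L ι : Type*}
    [Field F] [Field L] [Algebra F L] {x : ι → L} (hx : AlgebraicIndependent F x) :
    ∃ V : ValuationSubring L, (∀ d : F, algebraMap F L d ∈ V) ∧ Set.range x ⊆ V.nonunits := by
  set A := Algebra.adjoin F (Set.range x)
  -- evaluation at the origin, through `A ≃ MvPolynomial ι F`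
  let φ : A.toSubring →+* F := MvPolynomial.constantCoeff.comp hx.repr.toRingHom
  obtain ⟨V, hAV, hV⟩ := Ideal.image_subset_nonunits_valuationSubring (RingHom.ker φ)
    (RingHom.ker_ne_top φ)
  refine ⟨V, fun d => hAV (A.algebraMap_mem d), ?_⟩
  rintro _ ⟨i, rfl⟩
  have hxi : hx.aevalEquiv (MvPolynomial.X i) = ⟨x i, Algebra.subset_adjoin ⟨i, rfl⟩⟩ :=
    Subtype.ext (by simp)
  refine hV ⟨⟨x i, Algebra.subset_adjoin ⟨i, rfl⟩⟩, ?_, rfl⟩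
  simp [φ, AlgebraicIndependent.repr, ← hxi]

theorem AlgebraicIndependent.exists_valuationSubring_pow_div_mem_iff {F L : Type*} [Field F]
    [Field L] [Algebra F L] {x y : L} (hxy : AlgebraicIndependent F ![x, y]) (n : ℕ) :
    ∃ V : ValuationSubring L, (∀ d : F, algebraMap F L d ∈ V) ∧
      ∀ i, x ^ i / y ∈ V ↔ n < i := by
  have hx0 : x ≠ 0 := by simpa using hxy.ne_zero 0
  have hy0 : y ≠ 0 := by simpa using hxy.ne_zero 1
  obtain ⟨w, hw⟩ : ∃ w, w = x ^ (n + 1) / y := ⟨_, rfl⟩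
  obtain ⟨s, hs⟩ : ∃ s, s = y / x ^ n := ⟨_, rfl⟩
  have hx : x = w * s := by rw [hw, hs]; field_simp; ring
  have hy : y = s ^ (n + 1) * w ^ n := by
    rw [pow_succ', mul_assoc, ← mul_pow, mul_comm s w, ← hx, hs,
      div_mul_cancel₀ _ (pow_ne_zero n hx0)]
  have hws : AlgebraicIndependent F ![w, s] := by
    refine hxy.of_range_subset_adjoin ?_
    have hw : w ∈ Algebra.adjoin F (Set.range ![w, s]) := Algebra.subset_adjoin ⟨0, rfl⟩
    have hs : s ∈ Algebra.adjoin F (Set.range ![w, s]) := Algebra.subset_adjoin ⟨1, rfl⟩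
    rintro _ ⟨i, rfl⟩
    fin_cases i
    · simpa [← hx] using mul_mem hw hs
    · simpa [← hy] using mul_mem (pow_mem hs (n + 1)) (pow_mem hw n)
  obtain ⟨V, hFV, hV⟩ := hws.exists_valuationSubring_range_subset_nonunits
  have hwV : w ∈ V.nonunits := hV ⟨0, rfl⟩
  have hsV : s ∈ V.nonunits := hV ⟨1, rfl⟩
  have hxV : x ∈ V := hx ▸ V.nonunits_subset (mul_mem hwV hsV)
  refine ⟨V, hFV, fun i => ⟨fun hi => ?_, fun hi => ?_⟩⟩
  · by_contra! hin
    obtain ⟨k, rfl⟩ := Nat.exists_eq_add_of_le hin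
    have hinv : (x ^ i / y)⁻¹ = s * x ^ k := by rw [hs]; field_simp; ring
    have hsxV : s * x ^ k ∈ V.nonunits :=
      mul_lt_one_of_lt_of_le hsV ((V.valuation_le_one_iff _).mpr (pow_mem hxV k))
    rw [← hinv, V.inv_mem_nonunits_iff] at hsxV
    exact hsxV.elim (div_ne_zero (pow_ne_zero i hx0) hy0) (· hi)
  · obtain ⟨k, rfl⟩ := Nat.exists_eq_add_of_lt hi
    rw [show x ^ (n + k + 1) / y = w * x ^ k by rw [hw]; field_simp; ring]
    exact mul_mem (V.nonunits_subset hwV) (pow_mem hxV k)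

theorem ValuationSubring.isOpen_setOf_mem {K : Type*} [Field K] (a : K) :
    IsOpen {V : ValuationSubring K | a ∈ V} :=
  TopologicalSpace.isOpen_generateFrom_of_mem ⟨a, rfl⟩

theorem stmt12 (F L : Type*) [Field F] [Field L] [Algebra F L]
    -- transcendence degree strictly greater than 1: there exist two algebraically
    -- independent elements
    (htr : ∃ x y : L, AlgebraicIndependent F ![x, y]) :
    ¬ TopologicalSpace.NoetherianSpace (zarSet F L) := by
  obtain ⟨x, y, hxy⟩ := htr
  intro hNoeth
  let U : ℕ → TopologicalSpace.Opens (zarSet F L) := fun n =>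
    ⟨{V | ∃ i ≤ n, x ^ i / y ∈ V.1}, by
      convert isOpen_biUnion fun i (_ : i ∈ Set.Iic n) =>
        (ValuationSubring.isOpen_setOf_mem (x ^ i / y)).preimage continuous_subtype_val
      ext; simp⟩
  refine not_strictMono_of_wellFoundedGT U (strictMono_nat_of_lt_succ fun n => ?_)
  obtain ⟨V, hFV, hV⟩ := hxy.exists_valuationSubring_pow_div_mem_iff n
  refine SetLike.lt_iff_le_and_exists.mpr ⟨fun W ⟨i, hi, hW⟩ => ⟨i, hi.trans n.le_succ, hW⟩,
    ⟨V, hFV⟩, ⟨n + 1, le_rfl, (hV _).mpr n.lt_succ_self⟩, fun ⟨i, hi, hVi⟩ => ?_⟩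
  exact absurd ((hV i).mp hVi) (not_lt.mpr hi)
end

section
/- Let F ⊆ L be a finitely generated field extension of transcendence degree 1. Then the space Zar(L|F) of valuation subrings of L containing F is a Noetherian topological space. -/
/-!
If `x ∉ V` for a valuation ring `V ⊇ F` of `L`, then `x` is transcendental over `F` and
`y = x⁻¹` lies in the maximal ideal of `V`. Since `L` has transcendence degree one, it is finite
over `F(y)`, so the integral closure `R` of `F[y]` in the separable closure `S` of `F(y)` in `L`
is a Dedekind domain. `V ∩ S` is a proper valuation ring containing `R`, hence the localization
of `R` at a height-one prime containing `y`; there are finitely many such primes, and `V` is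
determined by `V ∩ S` because `L / S` is purely inseparable. So every subbasic open set of
`Zar(L|F)` is cofinite, and the topology is coarser than the (Noetherian) cofinite topology.
-/

open IsDedekindDomain IntermediateField

namespace ValuationSubring

variable {K : Type*} [Field K]

theorem mem_of_isIntegral {R : Type*} [CommRing R] [Algebra R K] (V : ValuationSubring K)
    (hRV : ∀ r, algebraMap R K r ∈ V) {x : K} (hx : IsIntegral R x) : x ∈ V := by
  obtain ⟨p, hmonic, hp⟩ := hx
  exact LocalSubring.mem_of_isMax_of_isIntegral V.isMax_toLocalSubring
    ⟨p.map ((algebraMap R K).codRestrict V.toLocalSubring.toSubring hRV), hmonic.map _,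
      (Polynomial.eval₂_map _ _ _).trans hp⟩

theorem mem_of_pow_mem (V : ValuationSubring K) {x : K} {n : ℕ} (hn : n ≠ 0) (hx : x ^ n ∈ V) :
    x ∈ V :=
  V.mem_of_isIntegral (R := V) (fun r ↦ r.2)
    (.of_pow (Nat.pos_of_ne_zero hn) (isIntegral_algebraMap (x := (⟨x ^ n, hx⟩ : V))))

theorem comap_injective_of_isPurelyInseparable {L : Type*} [Field L] [Algebra K L]
    [IsPurelyInseparable K L] :
    Function.Injective fun V : ValuationSubring L ↦ V.comap (algebraMap K L) := by
  have key {V W : ValuationSubring L} (h : V.comap (algebraMap K L) = W.comap (algebraMap K L))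
      {x : L} (hx : x ∈ V) : x ∈ W := by
    obtain ⟨n, t, ht⟩ := IsPurelyInseparable.pow_mem K (ringExpChar K) x
    have htV : t ∈ V.comap (algebraMap K L) := show algebraMap K L t ∈ V from ht ▸ pow_mem hx _
    exact W.mem_of_pow_mem (pow_ne_zero n (expChar_pos K (ringExpChar K)).ne')
      (ht ▸ (h ▸ htV : t ∈ W.comap (algebraMap K L)))
  exact fun V W h ↦ SetLike.ext fun x ↦ ⟨key h, key h.symm⟩

section Dedekind

variable {R : Type*} [CommRing R] [IsDedekindDomain R] [Algebra R K] [IsFractionRing R K]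

theorem valuationSubringAtPrime_le {v : HeightOneSpectrum R} {W : ValuationSubring K}
    (hRW : ∀ r, algebraMap R K r ∈ W) (hv : ∀ r ∉ v.asIdeal, (algebraMap R K r)⁻¹ ∈ W) :
    HeightOneSpectrum.valuationSubringAtPrime K v ≤ W := by
  rintro x ⟨a, s, hs, rfl⟩
  exact W.mul_mem _ _ (hRW a) (hv s hs)

theorem exists_eq_valuationSubringAtPrime (W : ValuationSubring K)
    (hRW : ∀ r, algebraMap R K r ∈ W) (hW : W ≠ ⊤) :
    ∃ v : HeightOneSpectrum R, (∀ r, r ∈ v.asIdeal ↔ algebraMap R K r ∈ W.nonunits) ∧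
      W = HeightOneSpectrum.valuationSubringAtPrime K v := by
  let P : Ideal R := (IsLocalRing.maximalIdeal W).comap ((algebraMap R K).codRestrict W hRW)
  have hP (r : R) : r ∈ P ↔ algebraMap R K r ∈ W.nonunits := W.coe_mem_nonunits_iff.symm
  have hinv (r : R) (hr : r ∉ P) : (algebraMap R K r)⁻¹ ∈ W := by
    simp only [hP, W.mem_nonunits_iff_or, not_or, not_not] at hr
    exact hr.2
  have hPbot : P ≠ ⊥ := by
    refine fun hbot ↦ hW (top_unique fun x _ ↦ ?_)
    obtain ⟨a, b, hb, rfl⟩ := IsFractionRing.div_surjective (A := R) x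
    have hbP : b ∉ P := by rw [hbot]; exact nonZeroDivisors.ne_zero hb
    exact div_eq_mul_inv (algebraMap R K a) _ ▸ W.mul_mem _ _ (hRW a) (hinv b hbP)
  exact ⟨⟨P, Ideal.IsPrime.comap _, hPbot⟩, hP,
    (eq_of_le_of_ne_top _ (valuationSubringAtPrime_le hRW hinv) hW).symm⟩

theorem finite_setOf_algebraMap_mem_nonunits {y : R} (hy : y ≠ 0) :
    {W : ValuationSubring K | (∀ r, algebraMap R K r ∈ W) ∧
      algebraMap R K y ∈ W.nonunits}.Finite := by
  refine ((Ideal.finite_factors (I := Ideal.span {y}) (by simpa using hy)).image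
    (HeightOneSpectrum.valuationSubringAtPrime K)).subset ?_
  rintro W ⟨hRW, hyW⟩
  have hW : W ≠ ⊤ := by
    rintro rfl
    simp [mem_nonunits_iff_or, hy] at hyW
  obtain ⟨v, hv, rfl⟩ := W.exists_eq_valuationSubringAtPrime hRW hW
  exact ⟨v, Ideal.dvd_span_singleton.2 ((hv y).2 hyW), rfl⟩

end Dedekind

theorem finite_setOf_algebraMap_mem_nonunits_of_isPurelyInseparable
    {R S L : Type*} [CommRing R] [IsDedekindDomain R] [Field S] [Algebra R S]
    [IsFractionRing R S] [Field L] [Algebra S L] [IsPurelyInseparable S L] [Algebra R L]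
    [IsScalarTower R S L] {y : R} (hy : y ≠ 0) :
    {V : ValuationSubring L | (∀ r, algebraMap R L r ∈ V) ∧
      algebraMap R L y ∈ V.nonunits}.Finite := by
  refine Set.Finite.of_finite_image
    ((finite_setOf_algebraMap_mem_nonunits (K := S) hy).subset ?_)
    comap_injective_of_isPurelyInseparable.injOn
  rintro _ ⟨V, ⟨hRV, hyV⟩, rfl⟩
  simp only [IsScalarTower.algebraMap_apply R S L, mem_nonunits_iff_or, map_eq_zero] at hRV hyV
  exact ⟨hRV, by simpa [mem_nonunits_iff_or, ← map_inv₀] using hyV⟩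

end ValuationSubring

theorem noetherianSpace_zarSet_of_finite {D K : Type*} [CommRing D] [Field K] [Algebra D K]
    (h : ∀ x : K, {V ∈ zarSet D K | x ∉ V}.Finite) :
    TopologicalSpace.NoetherianSpace (zarSet D K) := by
  refine TopologicalSpace.noetherianSpace_of_surjective CofiniteTopology.of.symm ?_
    CofiniteTopology.of.symm.surjective
  refine continuous_induced_rng.2 (continuous_generateFrom_iff.2 ?_)
  rintro _ ⟨x, rfl⟩
  rw [CofiniteTopology.isOpen_iff']
  refine Or.inr (((h x).preimage
    (Subtype.val_injective.comp CofiniteTopology.of.symm.injective).injOn).subset ?_)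
  exact fun V hV ↦ ⟨(CofiniteTopology.of.symm V).2, hV⟩

section TranscendenceDegreeOne

variable {F L : Type*} [Field F] [Field L] [Algebra F L]

theorem isAlgebraic_adjoin_simple_of_transcendental
    (htr2 : ∀ x y : L, ¬ AlgebraicIndependent F ![x, y]) {y : L} (hy : Transcendental F y) :
    Algebra.IsAlgebraic F⟮y⟯ L := by
  have hind : AlgebraicIndependent F ![y] := algebraicIndependent_iff_transcendental.2 hy
  have hbasis : IsTranscendenceBasis F ![y] := by
    refine hind.isTranscendenceBasis_iff_isAlgebraic.2 ⟨fun z ↦ not_not.1 fun hz ↦ htr2 z y ?_⟩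
    have := (algebraicIndependent_equiv (finSuccEquiv 1)).2
      ((hind.option_iff_transcendental z).2 hz)
    convert this using 1
    ext i; fin_cases i <;> rfl
  have := hbasis.isAlgebraic_field
  rwa [show Set.range ![y] = {y} by simp] at this

theorem finiteDimensional_adjoin_simple_of_transcendental [Algebra.EssFiniteType F L]
    (htr2 : ∀ x y : L, ¬ AlgebraicIndependent F ![x, y]) {y : L} (hy : Transcendental F y) :
    FiniteDimensional F⟮y⟯ L := by
  have := isAlgebraic_adjoin_simple_of_transcendental htr2 hy
  have : Algebra.EssFiniteType F⟮y⟯ L := .of_comp F _ _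
  exact Algebra.finite_of_essFiniteType_of_isAlgebraic

open scoped IntermediateField.algebraAdjoinAdjoin in
theorem finite_zarSet_sep_notMem_of_transcendental [Algebra.EssFiniteType F L]
    (htr2 : ∀ x y : L, ¬ AlgebraicIndependent F ![x, y]) {x : L} (hx : Transcendental F x) :
    {V ∈ zarSet F L | x ∉ V}.Finite := by
  set y := x⁻¹
  have hy : Transcendental F y := hx ∘ IsAlgebraic.inv_iff.1
  let A := Algebra.adjoin F {y}
  let K := F⟮y⟯
  -- Integral closures are only known to be Dedekind in separable extensions; passing to the
  -- separable closure `S` costs nothing, as `L / S` is purely inseparable.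
  let S := separableClosure K L
  let R := integralClosure A S
  have : IsPrincipalIdealRing A :=
    IsPrincipalIdealRing.of_surjective _ (Polynomial.algEquivOfTranscendental F y hy).surjective
  have := finiteDimensional_adjoin_simple_of_transcendental htr2 hy
  have : IsDedekindDomain R := integralClosure.isDedekindDomain A K S
  have : IsFractionRing R S := IsIntegralClosure.isFractionRing_of_finite_extension A K S R
  have : IsPurelyInseparable S L := separableClosure.isPurelyInseparable K L
  have : IsScalarTower A S L := .of_algebraMap_eq fun _ ↦ rfl
  let yR : R := algebraMap A R ⟨y, Algebra.self_mem_adjoin_singleton F y⟩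
  have algebraMap_yR : algebraMap R L yR = y := rfl
  have hyR : yR ≠ 0 := by
    rintro h
    rw [h, map_zero] at algebraMap_yR
    exact hy (algebraMap_yR ▸ isAlgebraic_zero)
  refine (ValuationSubring.finite_setOf_algebraMap_mem_nonunits_of_isPurelyInseparable
    (S := S) (L := L) hyR).subset ?_
  rintro V ⟨hFV, hxV⟩
  have hAV : A ≤ Subalgebra.mk V.toSubring.toSubsemiring hFV :=
    Algebra.adjoin_le (Set.singleton_subset_iff.2 ((V.mem_or_inv_mem x).resolve_left hxV))
  refine ⟨fun r ↦ V.mem_of_isIntegral (R := A) (fun a ↦ hAV a.2) ?_, ?_⟩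
  · exact r.2.map (IsScalarTower.toAlgHom A S L)
  · rw [ValuationSubring.mem_nonunits_iff_or, algebraMap_yR, inv_inv]
    exact Or.inr hxV

theorem finite_zarSet_sep_notMem [Algebra.EssFiniteType F L]
    (htr2 : ∀ x y : L, ¬ AlgebraicIndependent F ![x, y]) (x : L) :
    {V ∈ zarSet F L | x ∉ V}.Finite := by
  by_cases hx : IsAlgebraic F x
  · exact Set.finite_empty.subset fun V ⟨hFV, hxV⟩ ↦ hxV (V.mem_of_isIntegral hFV hx.isIntegral)
  · exact finite_zarSet_sep_notMem_of_transcendental htr2 hx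

end TranscendenceDegreeOne

theorem stmt13_general (F L : Type*) [Field F] [Field L] [Algebra F L]
    -- `L` is a finitely generated field extension of `F`:
    (hfg : ∃ s : Finset L, IntermediateField.adjoin F (s : Set L) = ⊤)
    (htr2 : ∀ x y : L, ¬ AlgebraicIndependent F ![x, y]) :
    TopologicalSpace.NoetherianSpace (zarSet F L) := by
  have : Algebra.EssFiniteType F L := fg_top_iff.1 hfg
  exact noetherianSpace_zarSet_of_finite (finite_zarSet_sep_notMem htr2)

theorem stmt13 (F L : Type*) [Field F] [Field L] [Algebra F L]
    -- `L` is a finitely generated field extension of `F`: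
    (hfg : ∃ s : Finset L, IntermediateField.adjoin F (s : Set L) = ⊤)
    -- of transcendence degree exactly 1:
    (htr1 : ∃ x : L, Transcendental F x)
    (htr2 : ∀ x y : L, ¬ AlgebraicIndependent F ![x, y]) :
    TopologicalSpace.NoetherianSpace (zarSet F L) :=
  stmt13_general F L hfg htr2
end

section
/- Let D be an integral domain with fraction field K. The set of finitely generated D-subalgebras of K is dense in Over(D) (the space of all rings between D and K) with respect to the constructible topology. -/
/-- The Zariski topology on the set of subrings of a field `K`: subbasic open sets are
the sets of subrings containing a given element of `K`. -/
instance overTopology (K : Type*) [Field K] : TopologicalSpace (Subring K) :=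
  TopologicalSpace.generateFrom {U | ∃ x : K, U = {S : Subring K | x ∈ S}}

/-- The space `Over(D)` of overrings of `D`: subrings of `K` containing the image of `D`. -/
def overSet (D K : Type*) [CommRing D] [Field K] [Algebra D K] : Set (Subring K) :=
  {S | ∀ d : D, algebraMap D K d ∈ S}

/-- The constructible (patch) topology associated to a topology: the coarsest topology in
which the open and compact subsets of the original topology are clopen. -/
def patchTopology (X : Type*) [TopologicalSpace X] : TopologicalSpace X :=
  TopologicalSpace.generateFrom
    ({U | IsOpen U ∧ IsCompact U} ∪ {U | IsOpen Uᶜ ∧ IsCompact Uᶜ})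

/-! Zariski-open sets of `Over(D)` are upward closed, so their complements are downward closed.
Hence a patch-open set containing `A` contains every `B ≤ A` lying in some Zariski
neighbourhood `B(x₁, …, xₙ)` of `A` with all `xᵢ ∈ A`, and `D[x₁, …, xₙ]` is such a `B`. -/

section PatchTopology

variable {X : Type*} [TopologicalSpace X] [Preorder X]

theorem exists_isOpen_inter_Iic_subset_of_isOpen_patchTopology
    (hup : ∀ U : Set X, IsOpen U → IsUpperSet U) {V : Set X}
    (hV : (patchTopology X).IsOpen V) {a : X} (ha : a ∈ V) :
    ∃ W : Set X, IsOpen W ∧ a ∈ W ∧ W ∩ Set.Iic a ⊆ V := by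
  induction hV generalizing a with
  | basic U hU =>
    rcases hU with ⟨hUopen, -⟩ | ⟨hUcopen, -⟩
    · exact ⟨U, hUopen, ha, Set.inter_subset_left⟩
    · refine ⟨Set.univ, isOpen_univ, trivial, fun b ⟨_, hba⟩ => ?_⟩
      by_contra hbU
      exact hup _ hUcopen hba hbU ha
  | univ => exact ⟨Set.univ, isOpen_univ, trivial, Set.subset_univ _⟩
  | inter V₁ V₂ _ _ ih₁ ih₂ =>
    obtain ⟨W₁, hW₁, haW₁, hW₁V⟩ := ih₁ ha.1
    obtain ⟨W₂, hW₂, haW₂, hW₂V⟩ := ih₂ ha.2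
    refine ⟨W₁ ∩ W₂, hW₁.inter hW₂, ⟨haW₁, haW₂⟩, fun b ⟨⟨hb₁, hb₂⟩, hba⟩ => ?_⟩
    exact ⟨hW₁V ⟨hb₁, hba⟩, hW₂V ⟨hb₂, hba⟩⟩
  | sUnion 𝒮 _ ih =>
    obtain ⟨V, hV𝒮, haV⟩ := ha
    obtain ⟨W, hW, haW, hWV⟩ := ih V hV𝒮 haV
    exact ⟨W, hW, haW, hWV.trans (Set.subset_sUnion_of_mem hV𝒮)⟩

end PatchTopology

section Zariski

variable {K : Type*} [Field K]

theorem Subring.exists_finset_of_isOpen {U : Set (Subring K)} (hU : IsOpen U)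
    {S : Subring K} (hS : S ∈ U) :
    ∃ s : Finset K, (s : Set K) ⊆ S ∧ ∀ T : Subring K, (s : Set K) ⊆ T → T ∈ U := by
  classical
  induction hU generalizing S with
  | basic V hV =>
    obtain ⟨x, rfl⟩ := hV
    exact ⟨{x}, by simpa using hS, fun T hT => by simpa using hT⟩
  | univ => exact ⟨∅, by simp, fun _ _ => trivial⟩
  | inter V W _ _ ihV ihW =>
    obtain ⟨s, hsS, hsV⟩ := ihV hS.1
    obtain ⟨t, htS, htW⟩ := ihW hS.2
    refine ⟨s ∪ t, by simpa [Set.union_subset_iff] using ⟨hsS, htS⟩, fun T hT => ?_⟩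
    rw [Finset.coe_union, Set.union_subset_iff] at hT
    exact ⟨hsV T hT.1, htW T hT.2⟩
  | sUnion 𝒮 _ ih =>
    obtain ⟨V, hV𝒮, hSV⟩ := hS
    obtain ⟨s, hsS, hsV⟩ := ih V hV𝒮 hSV
    exact ⟨s, hsS, fun T hT => ⟨V, hV𝒮, hsV T hT⟩⟩

theorem Subring.isUpperSet_of_isOpen {U : Set (Subring K)} (hU : IsOpen U) : IsUpperSet U := by
  intro S T hST hS
  obtain ⟨s, hsS, hsU⟩ := Subring.exists_finset_of_isOpen hU hS
  exact hsU T (hsS.trans hST)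

end Zariski

section Overrings

variable {D K : Type*} [CommRing D] [Field K] [Algebra D K]

theorem isUpperSet_of_isOpen_overSet {U : Set (overSet D K)} (hU : IsOpen U) :
    IsUpperSet U := by
  obtain ⟨V, hV, rfl⟩ := isOpen_induced_iff.1 hU
  exact (Subring.isUpperSet_of_isOpen hV).preimage (Subtype.mono_coe _)

theorem adjoin_mem_overSet (s : Set K) :
    (Algebra.adjoin D s).toSubring ∈ overSet D K :=
  fun d => Subalgebra.algebraMap_mem _ d

theorem adjoin_toSubring_le_of_mem_overSet {S : Subring K} (hS : S ∈ overSet D K) {s : Set K}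
    (hs : s ⊆ S) : (Algebra.adjoin D s).toSubring ≤ S := by
  rw [Algebra.adjoin_eq_ring_closure, Subring.closure_le]
  rintro x (⟨d, rfl⟩ | hx)
  exacts [hS d, hs hx]

end Overrings

theorem stmt17_general (D K : Type*) [CommRing D] [Field K] [Algebra D K] :
    @Dense (overSet D K) (patchTopology (overSet D K))
      {S : overSet D K | ∃ s : Finset K,
        (S : Subring K) = (Algebra.adjoin D (s : Set K)).toSubring} := by
  refine (@dense_iff_inter_open (overSet D K) (patchTopology (overSet D K)) _).2 ?_
  rintro U hU ⟨S, hSU⟩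
  obtain ⟨W, hW, hSW, hWU⟩ :=
    exists_isOpen_inter_Iic_subset_of_isOpen_patchTopology (fun _ => isUpperSet_of_isOpen_overSet)
      hU hSU
  obtain ⟨W', hW', rfl⟩ := isOpen_induced_iff.1 hW
  obtain ⟨s, hsS, hsW'⟩ := Subring.exists_finset_of_isOpen hW' hSW
  let A : overSet D K := ⟨(Algebra.adjoin D (s : Set K)).toSubring, adjoin_mem_overSet _⟩
  have hAS : A ≤ S := adjoin_toSubring_le_of_mem_overSet S.2 hsS
  have hAW' : (A : Subring K) ∈ W' := hsW' _ Algebra.subset_adjoin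
  exact ⟨A, hWU ⟨hAW', hAS⟩, s, rfl⟩

theorem stmt17 (D K : Type*) [CommRing D] [IsDomain D] [Field K] [Algebra D K]
    [IsFractionRing D K] :
    @Dense (overSet D K) (patchTopology (overSet D K))
      {S : overSet D K | ∃ s : Finset K,
        (S : Subring K) = (Algebra.adjoin D (s : Set K)).toSubring} :=
  stmt17_general D K
end
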